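/- arXiv:1909.01479 — 5 statements merged into one kernel-verified Lean document; each statement's English description precedes it below -/
import Mathlib

section
/- Consider the linear system Ax = b where A ∈ ℝ^{N×N} is symmetric positive definite with distinct eigenvalues 0 < λ_1 < ... < λ_N and orthonormal eigenvectors v_1, ..., v_N. Let the iterates be generated by the minimal gradient (MG) method x_{n+1} = x_n − α_n^MG g_n, where g_n = A x_n − b and α_n^MG = (g_nᵀ A g_n)/(g_nᵀ A² g_n). Write g_n = Σ_{i=1}^N ζ_{i,n} v_i and assume ζ_{1,0} ≠ 0 and ζ_{N,0} ≠ 0 (hence g_n ≠ 0 for all n). Then lim_{n→∞} ( 1/(α_{n−1}^MG α_n^MG) − (g_nᵀ A g_n)/((α_{n−1}^MG)² g_{n−1}ᵀ A g_{n−1}) ) = λ_1 λ_N. -/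
open Filter Topology Matrix Finset

private lemma merge3 {N : ℕ} (F G H : Fin N → Fin N → ℝ) :
    (∑ i, ∑ j, F i j) + (∑ i, ∑ j, G i j) - 2*(∑ i, ∑ j, H i j)
      = ∑ i, ∑ j, (F i j + G i j - 2 * H i j) := by
  simp only [Finset.mul_sum, ← Finset.sum_add_distrib, ← Finset.sum_sub_distrib]

private lemma hankel_pair {N : ℕ} (lam W : Fin N → ℝ) (k : ℕ) :
    2*((∑ i, W i*lam i^k)*(∑ i, W i*lam i^(k+2)) - (∑ i, W i*lam i^(k+1))^2)
      = ∑ i, ∑ j, W i*W j*(lam i*lam j)^k*(lam i - lam j)^2 := by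
  have h1 : (∑ i, W i*lam i^k)*(∑ j, W j*lam j^(k+2))
      = ∑ i, ∑ j, (W i*lam i^k)*(W j*lam j^(k+2)) := Finset.sum_mul_sum _ _ _ _
  have h2 : (∑ i, W i*lam i^(k+2))*(∑ j, W j*lam j^k)
      = ∑ i, ∑ j, (W i*lam i^(k+2))*(W j*lam j^k) := Finset.sum_mul_sum _ _ _ _
  have h3 : (∑ i, W i*lam i^(k+1))^2
      = ∑ i, ∑ j, (W i*lam i^(k+1))*(W j*lam j^(k+1)) := by
    rw [sq]; exact Finset.sum_mul_sum _ _ _ _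
  calc 2*((∑ i, W i*lam i^k)*(∑ i, W i*lam i^(k+2)) - (∑ i, W i*lam i^(k+1))^2)
      = (∑ i, ∑ j, (W i*lam i^k)*(W j*lam j^(k+2)))
        + (∑ i, ∑ j, (W i*lam i^(k+2))*(W j*lam j^k))
        - 2*(∑ i, ∑ j, (W i*lam i^(k+1))*(W j*lam j^(k+1))) := by
        rw [← h1, ← h2, ← h3]; ring
    _ = ∑ i, ∑ j, ((W i*lam i^k)*(W j*lam j^(k+2)) + (W i*lam i^(k+2))*(W j*lam j^k)
          - 2*((W i*lam i^(k+1))*(W j*lam j^(k+1)))) := merge3 _ _ _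
    _ = ∑ i, ∑ j, W i*W j*(lam i*lam j)^k*(lam i - lam j)^2 := by
        refine Finset.sum_congr rfl fun i _ => Finset.sum_congr rfl fun j _ => ?_; ring

set_option maxHeartbeats 2000000 in
theorem mg_product_limit
    (N : ℕ) (hN : 2 ≤ N)
    (A : Matrix (Fin N) (Fin N) ℝ) (b : Fin N → ℝ)
    (hA : A.PosDef)
    (lam : Fin N → ℝ) (v : Fin N → Fin N → ℝ)
    (hlam0 : 0 < lam ⟨0, by omega⟩)
    (hmono : StrictMono lam)
    (heig : ∀ i, A.mulVec (v i) = lam i • v i)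
    (horth : ∀ i j, v i ⬝ᵥ v j = if i = j then (1 : ℝ) else 0)
    (x g : ℕ → Fin N → ℝ) (alpha : ℕ → ℝ)
    (hg : ∀ n, g n = A.mulVec (x n) - b)
    (halpha : ∀ n, alpha n =
      (g n ⬝ᵥ A.mulVec (g n)) / (g n ⬝ᵥ A.mulVec (A.mulVec (g n))))
    (hx : ∀ n, x (n + 1) = x n - alpha n • g n)
    (zeta : ℕ → Fin N → ℝ)
    (hzeta : ∀ n, g n = ∑ i, zeta n i • v i)
    (hz1 : zeta 0 ⟨0, by omega⟩ ≠ 0)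
    (hzN : zeta 0 ⟨N - 1, by omega⟩ ≠ 0) :
    Tendsto (fun n => 1 / (alpha (n - 1) * alpha n) -
        (g n ⬝ᵥ A.mulVec (g n)) /
          ((alpha (n - 1)) ^ 2 * (g (n - 1) ⬝ᵥ A.mulVec (g (n - 1))))) atTop
      (𝓝 (lam ⟨0, by omega⟩ * lam ⟨N - 1, by omega⟩)) := by
  have hN0 : 0 < N := by omega
  set i1 : Fin N := ⟨0, by omega⟩ with hi1def
  set iN : Fin N := ⟨N - 1, by omega⟩ with hiNdef
  -- bridge lemmas
  have hvdot : ∀ (c : Fin N → ℝ) (i : Fin N), v i ⬝ᵥ (∑ j, c j • v j) = c i := by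
    intro c i
    calc v i ⬝ᵥ (∑ j, c j • v j) = ∑ j, c j * (v i ⬝ᵥ v j) := by
          simp only [dotProduct, Finset.sum_apply, Pi.smul_apply, smul_eq_mul,
            Finset.mul_sum]
          rw [Finset.sum_comm]
          exact Finset.sum_congr rfl fun j _ => Finset.sum_congr rfl fun k _ => by ring
      _ = c i := by simp [horth]
  have hmv : ∀ (c : Fin N → ℝ), A.mulVec (∑ i, c i • v i) = ∑ i, (c i * lam i) • v i := by
    intro c
    have h0 : A.mulVec (∑ i, c i • v i) = ∑ i, c i • A.mulVec (v i) := by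
      rw [← Matrix.mulVecLin_apply, map_sum]
      simp [Matrix.mulVecLin_apply]
    rw [h0]
    refine Finset.sum_congr rfl fun i _ => ?_
    rw [heig i, smul_smul]
  have hdd : ∀ (c d : Fin N → ℝ),
      (∑ i, c i • v i) ⬝ᵥ (∑ j, d j • v j) = ∑ i, c i * d i := by
    intro c d
    have key : ∀ q : Fin N → ℝ, (∑ i, c i • v i) ⬝ᵥ q = ∑ i, c i * (v i ⬝ᵥ q) := by
      intro q
      simp only [dotProduct, Finset.sum_apply, Pi.smul_apply, smul_eq_mul,
        Finset.sum_mul, Finset.mul_sum]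
      rw [Finset.sum_comm]
      exact Finset.sum_congr rfl fun j _ => Finset.sum_congr rfl fun k _ => by ring
    rw [key]
    exact Finset.sum_congr rfl fun i _ => by rw [hvdot d i]
  have hAg : ∀ n, A.mulVec (g n) = ∑ i, (zeta n i * lam i) • v i := by
    intro n; rw [hzeta n, hmv]
  have hgrec : ∀ n, g (n+1) = g n - alpha n • A.mulVec (g n) := by
    intro n
    rw [hg (n+1), hx n, Matrix.mulVec_sub, Matrix.mulVec_smul, hg n]
    abel
  have hzrec : ∀ n i, zeta (n+1) i = (1 - alpha n * lam i) * zeta n i := by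
    intro n i
    have h1 : zeta (n+1) i = v i ⬝ᵥ g (n+1) := by
      rw [hzeta (n+1)]; exact (hvdot _ i).symm
    rw [h1, hgrec n, dotProduct_sub, dotProduct_smul, hAg n, hzeta n,
      hvdot, hvdot]
    simp only [smul_eq_mul]; ring
  -- scalar moments
  set W : ℕ → Fin N → ℝ := fun n i => (zeta n i)^2 with hWdef
  set M : ℕ → ℕ → ℝ := fun k n => ∑ i, W n i * lam i ^ k with hMdef
  have hsA : ∀ n, g n ⬝ᵥ A.mulVec (g n) = M 1 n := by
    intro n
    rw [hAg n, hzeta n, hdd]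
    exact Finset.sum_congr rfl fun i _ => by simp only [hWdef, hMdef]; ring
  have htA : ∀ n, g n ⬝ᵥ A.mulVec (A.mulVec (g n)) = M 2 n := by
    intro n
    rw [hAg n, hmv, hzeta n, hdd]
    exact Finset.sum_congr rfl fun i _ => by simp only [hWdef, hMdef]; ring
  have halST : ∀ n, alpha n = M 1 n / M 2 n := by
    intro n; rw [halpha n, hsA n, htA n]
  -- basic facts about lam
  have hl1le : ∀ i, lam i1 ≤ lam i := by
    intro i
    refine hmono.monotone ?_
    rw [hi1def, Fin.le_def]
    simp
  have hlleN : ∀ i, lam i ≤ lam iN := by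
    intro i
    refine hmono.monotone ?_
    rw [hiNdef, Fin.le_def]
    have := i.isLt
    simp
    omega
  have hlpos : ∀ i, 0 < lam i := fun i => lt_of_lt_of_le hlam0 (hl1le i)
  have hi1N : i1 ≠ iN := by
    rw [hi1def, hiNdef]
    simp only [ne_eq, Fin.mk.injEq]
    omega
  have hl1N : lam i1 < lam iN := by
    refine hmono ?_
    rw [hi1def, hiNdef, Fin.lt_def]
    simp
    omega
  have hWnn : ∀ n i, 0 ≤ W n i := fun n i => sq_nonneg _
  have hWpos : ∀ n (i : Fin N), zeta n i ≠ 0 → 0 < W n i := fun n i h =>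
    lt_of_le_of_ne (sq_nonneg _) (Ne.symm (pow_ne_zero 2 h))
  have hM1pos : ∀ n, zeta n iN ≠ 0 → 0 < M 1 n := by
    intro n hnz
    have hle : W n iN * lam iN ^ 1 ≤ M 1 n :=
      Finset.single_le_sum (f := fun i => W n i * lam i ^ 1)
        (fun i _ => mul_nonneg (hWnn n i) (pow_nonneg (hlpos i).le _)) (mem_univ iN)
    have h0 : 0 < W n iN * lam iN ^ 1 := by
      have h1 := hWpos n iN hnz
      have h2 := hlpos iN
      positivity
    linarith
  have hM2pos : ∀ n, zeta n iN ≠ 0 → 0 < M 2 n := by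
    intro n hnz
    have hle : W n iN * lam iN ^ 2 ≤ M 2 n :=
      Finset.single_le_sum (f := fun i => W n i * lam i ^ 2)
        (fun i _ => mul_nonneg (hWnn n i) (pow_nonneg (hlpos i).le _)) (mem_univ iN)
    have h0 : 0 < W n iN * lam iN ^ 2 := by
      have h1 := hWpos n iN hnz
      have h2 := hlpos iN
      positivity
    linarith
  have hApos : ∀ n, zeta n iN ≠ 0 → 0 < M 2 n - M 1 n * lam i1 := by
    intro n hnz
    have e : M 2 n - M 1 n * lam i1 = ∑ i, W n i * lam i * (lam i - lam i1) := by
      simp only [hMdef, Finset.sum_mul]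
      rw [← Finset.sum_sub_distrib]
      exact Finset.sum_congr rfl fun i _ => by ring
    rw [e]
    have hterm : ∀ i ∈ Finset.univ, 0 ≤ W n i * lam i * (lam i - lam i1) := fun i _ =>
      mul_nonneg (mul_nonneg (hWnn n i) (hlpos i).le) (sub_nonneg.mpr (hl1le i))
    have hle := Finset.single_le_sum hterm (mem_univ iN)
    have h0 : 0 < W n iN * lam iN * (lam iN - lam i1) :=
      mul_pos (mul_pos (hWpos n iN hnz) (hlpos iN)) (sub_pos.mpr hl1N)
    linarith
  have hBpos : ∀ n, zeta n i1 ≠ 0 → 0 < M 1 n * lam iN - M 2 n := by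
    intro n hnz
    have e : M 1 n * lam iN - M 2 n = ∑ i, W n i * lam i * (lam iN - lam i) := by
      simp only [hMdef, Finset.sum_mul]
      rw [← Finset.sum_sub_distrib]
      exact Finset.sum_congr rfl fun i _ => by ring
    rw [e]
    have hterm : ∀ i ∈ Finset.univ, 0 ≤ W n i * lam i * (lam iN - lam i) := fun i _ =>
      mul_nonneg (mul_nonneg (hWnn n i) (hlpos i).le) (sub_nonneg.mpr (hlleN i))
    have hle := Finset.single_le_sum hterm (mem_univ i1)
    have h0 : 0 < W n i1 * lam i1 * (lam iN - lam i1) :=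
      mul_pos (mul_pos (hWpos n i1 hnz) (hlpos i1)) (sub_pos.mpr hl1N)
    linarith
  -- master induction
  have hnz : ∀ n, zeta n i1 ≠ 0 ∧ zeta n iN ≠ 0 := by
    intro n
    induction n with
    | zero => exact ⟨hz1, hzN⟩
    | succ n ih =>
      obtain ⟨h1, hN'⟩ := ih
      have ht2 := hM2pos n hN'
      have hfa : 0 < 1 - alpha n * lam i1 := by
        rw [halST n]
        have e : 1 - M 1 n / M 2 n * lam i1 = (M 2 n - M 1 n * lam i1)/M 2 n := by
          field_simp
        rw [e]
        exact div_pos (hApos n hN') ht2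
      have hfb : 1 - alpha n * lam iN < 0 := by
        rw [halST n]
        have e : 1 - M 1 n / M 2 n * lam iN = -((M 1 n * lam iN - M 2 n)/M 2 n) := by
          field_simp
          ring
        rw [e]
        have := div_pos (hBpos n h1) ht2
        linarith
      exact ⟨by rw [hzrec n i1]; exact mul_ne_zero (ne_of_gt hfa) h1,
        by rw [hzrec n iN]; exact mul_ne_zero (ne_of_lt hfb) hN'⟩
  -- global positivity
  have hW1 : ∀ n, 0 < W n i1 := fun n => hWpos n i1 (hnz n).1
  have hWN : ∀ n, 0 < W n iN := fun n => hWpos n iN (hnz n).2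
  have hs : ∀ n, 0 < M 1 n := fun n => hM1pos n (hnz n).2
  have ht : ∀ n, 0 < M 2 n := fun n => hM2pos n (hnz n).2
  have ha : ∀ n, 0 < M 2 n - M 1 n * lam i1 := fun n => hApos n (hnz n).2
  have hb : ∀ n, 0 < M 1 n * lam iN - M 2 n := fun n => hBpos n (hnz n).1
  -- K and D
  set K : ℕ → ℝ := fun n => ∑ i, W n i * lam i * ((lam i - lam i1) * (lam iN - lam i))
    with hKdef
  set D : ℕ → ℝ := fun n => M 1 n * M 3 n - (M 2 n)^2 with hDdef
  have hKnn : ∀ n, 0 ≤ K n := by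
    intro n
    simp only [hKdef]
    refine Finset.sum_nonneg fun i _ => ?_
    have h1 := hWnn n i
    have h2 := (hlpos i).le
    have h3 := sub_nonneg.mpr (hl1le i)
    have h4 := sub_nonneg.mpr (hlleN i)
    positivity
  have hDd : ∀ n, 2 * D n
      = ∑ i, ∑ j, W n i*W n j*(lam i*lam j)^1*(lam i - lam j)^2 := by
    intro n
    have h := hankel_pair lam (W n) 1
    simp only [hDdef, hMdef]
    norm_num at h ⊢
    exact h
  have hDpos : ∀ n, 0 < D n := by
    intro n
    have h2 := hDd n
    have hterm : ∀ i j : Fin N, 0 ≤ W n i*W n j*(lam i*lam j)^1*(lam i - lam j)^2 := by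
      intro i j
      have h1 := hWnn n i
      have h2 := hWnn n j
      have h3 := (hlpos i).le
      have h4 := (hlpos j).le
      positivity
    have hout : W n i1*W n iN*(lam i1*lam iN)^1*(lam i1 - lam iN)^2
        ≤ ∑ i, ∑ j, W n i*W n j*(lam i*lam j)^1*(lam i - lam j)^2 := by
      have hstep1 : W n i1*W n iN*(lam i1*lam iN)^1*(lam i1 - lam iN)^2
          ≤ ∑ j, W n i1*W n j*(lam i1*lam j)^1*(lam i1 - lam j)^2 :=
        Finset.single_le_sum (f := fun j => W n i1*W n j*(lam i1*lam j)^1*(lam i1 - lam j)^2)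
          (fun j _ => hterm i1 j) (mem_univ iN)
      have hstep2 : ∑ j, W n i1*W n j*(lam i1*lam j)^1*(lam i1 - lam j)^2
          ≤ ∑ i, ∑ j, W n i*W n j*(lam i*lam j)^1*(lam i - lam j)^2 :=
        Finset.single_le_sum (f := fun i => ∑ j, W n i*W n j*(lam i*lam j)^1*(lam i - lam j)^2)
          (fun i _ => Finset.sum_nonneg fun j _ => hterm i j) (mem_univ i1)
      linarith
    have hpos0 : 0 < W n i1*W n iN*(lam i1*lam iN)^1*(lam i1 - lam iN)^2 := by
      have h1 := hW1 n
      have h2 := hWN n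
      have h3 := hlpos i1
      have h4 := hlpos iN
      have h5 : lam i1 - lam iN ≠ 0 := by
        have := hl1N; intro hc; linarith
      positivity
    linarith
  have hI1 : ∀ n, (M 2 n - M 1 n * lam i1)*(M 1 n * lam iN - M 2 n) = D n + M 1 n * K n := by
    intro n
    have hKe : M 2 n*(lam i1 + lam iN) - M 1 n*(lam i1*lam iN) - M 3 n = K n := by
      simp only [hMdef, hKdef, Finset.sum_mul]
      rw [← Finset.sum_sub_distrib, ← Finset.sum_sub_distrib]
      exact Finset.sum_congr rfl fun i _ => by ring
    simp only [hDdef]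
    linear_combination (M 1 n) * hKe
  -- moment recurrence
  have hmrec : ∀ k n, M k (n+1) = M k n - 2*alpha n*M (k+1) n + (alpha n)^2*M (k+2) n := by
    intro k n
    have h1 : M k (n+1) = ∑ i, (W n i*lam i^k - 2*alpha n*(W n i*lam i^(k+1))
        + (alpha n)^2*(W n i*lam i^(k+2))) := by
      simp only [hMdef, hWdef]
      refine Finset.sum_congr rfl fun i _ => ?_
      rw [hzrec n i]; ring
    rw [h1, Finset.sum_add_distrib, Finset.sum_sub_distrib, ← Finset.mul_sum, ← Finset.mul_sum]
  -- remaining sum-level lemmas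
  have hWr1 : ∀ n, W (n+1) i1 = (M 2 n - M 1 n*lam i1)^2*W n i1/(M 2 n)^2 := by
    intro n
    have htne := (ht n).ne'
    simp only [hWdef]
    rw [hzrec n i1, halST n]
    field_simp
  have hWrN : ∀ n, W (n+1) iN = (M 1 n*lam iN - M 2 n)^2*W n iN/(M 2 n)^2 := by
    intro n
    have htne := (ht n).ne'
    simp only [hWdef]
    rw [hzrec n iN, halST n]
    field_simp
    ring
  have hge : ∀ n, W n i1*lam i1 + W n iN*lam iN ≤ M 1 n := by
    intro n
    have h := Finset.add_le_sum (f := fun i => W n i*lam i^1)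
      (fun i _ => mul_nonneg (hWnn n i) (pow_nonneg (hlpos i).le _))
      (mem_univ i1) (mem_univ iN) hi1N
    simp only [pow_one] at h
    simpa [hMdef] using h
  set U : ℕ → ℝ := fun n => M 2 n*M 4 n - (M 3 n)^2 with hUdef
  have hUd : ∀ n, 2 * U n
      = ∑ i, ∑ j, W n i*W n j*(lam i*lam j)^2*(lam i - lam j)^2 := by
    intro n
    have h := hankel_pair lam (W n) 2
    simp only [hUdef, hMdef]
    norm_num at h ⊢
    exact h
  have hsK : ∀ n, ∑ i, ∑ j, (W n i*lam i)*(W n j*lam j)*((lam i - lam i1)*(lam iN - lam i)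
        + (lam j - lam i1)*(lam iN - lam j)) = 2*(M 1 n*K n) := by
    intro n
    have e1 : M 1 n*K n = ∑ i, ∑ j,
        (W n i*lam i^1)*(W n j*lam j*((lam j - lam i1)*(lam iN - lam j))) := by
      simp only [hMdef, hKdef]; exact Finset.sum_mul_sum _ _ _ _
    have e2 : M 1 n*K n = ∑ i, ∑ j,
        (W n i*lam i*((lam i - lam i1)*(lam iN - lam i)))*(W n j*lam j^1) := by
      rw [mul_comm]; simp only [hMdef, hKdef]; exact Finset.sum_mul_sum _ _ _ _
    calc ∑ i, ∑ j, (W n i*lam i)*(W n j*lam j)*((lam i - lam i1)*(lam iN - lam i)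
          + (lam j - lam i1)*(lam iN - lam j))
        = ∑ i, ∑ j, ((W n i*lam i*((lam i - lam i1)*(lam iN - lam i)))*(W n j*lam j^1)
          + (W n i*lam i^1)*(W n j*lam j*((lam j - lam i1)*(lam iN - lam j)))) := by
          exact Finset.sum_congr rfl fun i _ => Finset.sum_congr rfl fun j _ => by ring
      _ = (∑ i, ∑ j, (W n i*lam i*((lam i - lam i1)*(lam iN - lam i)))*(W n j*lam j^1))
          + ∑ i, ∑ j, (W n i*lam i^1)*(W n j*lam j*((lam j - lam i1)*(lam iN - lam j))) := by
          simp only [Finset.sum_add_distrib]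
      _ = 2*(M 1 n*K n) := by rw [← e1, ← e2]; ring
  clear_value W M K D U
  -- fraction-level algebra
  have he1 : ∀ n, M 1 (n+1)*(M 2 n)^2 = M 1 n*D n := by
    intro n
    have h := hmrec 1 n
    norm_num at h
    rw [halST n] at h
    have htne := (ht n).ne'
    rw [h]
    simp only [hDdef]
    field_simp
    ring
  have he2 : ∀ n, M 2 (n+1)*(M 2 n)^2
      = (M 2 n)^3 - 2*M 1 n*M 2 n*M 3 n + (M 1 n)^2*M 4 n := by
    intro n
    have h := hmrec 2 n
    norm_num at h
    rw [halST n] at h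
    have htne := (ht n).ne'
    rw [h]
    field_simp
  have hM1' : ∀ n, M 1 (n+1) = M 1 n*D n/(M 2 n)^2 := by
    intro n
    rw [eq_div_iff (by have := ht n; positivity)]
    exact he1 n
  have hM2' : ∀ n, M 2 (n+1)
      = ((M 2 n)^3 - 2*M 1 n*M 2 n*M 3 n + (M 1 n)^2*M 4 n)/(M 2 n)^2 := by
    intro n
    rw [eq_div_iff (by have := ht n; positivity)]
    exact he2 n
  -- the Lyapunov function P
  set P : ℕ → ℝ := fun n => W n i1*W n iN*(lam i1*lam iN)/(M 1 n)^2 with hPdef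
  have hPpos : ∀ n, 0 < P n := by
    intro n
    have h1 := hW1 n
    have h2 := hWN n
    have h3 := hlpos i1
    have h4 := hlpos iN
    have h5 := hs n
    simp only [hPdef]
    positivity
  have hPstep : ∀ n, P (n+1) = P n*((D n + M 1 n*K n)/(D n))^2 := by
    intro n
    have htne := (ht n).ne'
    have hsne := (hs n).ne'
    have hDne := (hDpos n).ne'
    simp only [hPdef]
    rw [hM1' n, hWr1 n, hWrN n, ← hI1 n]
    field_simp
  have hPmono : ∀ n, P n ≤ P (n+1) := by
    intro n
    rw [hPstep n]
    have h1 : (1:ℝ) ≤ (D n + M 1 n*K n)/D n := by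
      rw [le_div_iff₀ (hDpos n)]
      have h0 : 0 ≤ M 1 n*K n := mul_nonneg (hs n).le (hKnn n)
      linarith
    have hq2 : (1:ℝ) ≤ ((D n + M 1 n*K n)/D n)^2 := by nlinarith [h1]
    nlinarith [mul_nonneg (sub_nonneg.mpr hq2) (hPpos n).le]
  have hPub : ∀ n, P n ≤ 1/4 := by
    intro n
    have h0 : 0 ≤ W n i1*lam i1 := mul_nonneg (hWnn n i1) (hlpos i1).le
    have h0' : 0 ≤ W n iN*lam iN := mul_nonneg (hWnn n iN) (hlpos iN).le
    simp only [hPdef]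
    rw [div_le_iff₀ (by have := hs n; positivity)]
    nlinarith [sq_nonneg (W n i1*lam i1 - W n iN*lam iN), hge n]
  -- convergence of P, hence eps → 0
  have hmonoP : Monotone P := monotone_nat_of_le_succ hPmono
  have hbddP : BddAbove (Set.range P) := ⟨1/4, by rintro _ ⟨n, rfl⟩; exact hPub n⟩
  have hLlim : Tendsto P atTop (𝓝 (iSup P)) := tendsto_atTop_ciSup hmonoP hbddP
  have hLpos : 0 < iSup P := lt_of_lt_of_le (hPpos 0) (le_ciSup hbddP 0)
  have hsucc : Tendsto (fun n => P (n+1)) atTop (𝓝 (iSup P)) :=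
    hLlim.comp (tendsto_add_atTop_nat 1)
  have hratio : Tendsto (fun n => P (n+1)/P n) atTop (𝓝 1) := by
    have h := hsucc.div hLlim (ne_of_gt hLpos)
    rw [div_self (ne_of_gt hLpos)] at h; exact h
  set eps : ℕ → ℝ := fun n => M 1 n*K n/D n with hepsdef
  have heps_nn : ∀ n, 0 ≤ eps n := fun n =>
    div_nonneg (mul_nonneg (hs n).le (hKnn n)) (hDpos n).le
  have hre : ∀ n, P (n+1)/P n = (1 + eps n)^2 := by
    intro n
    rw [hPstep n, mul_comm, mul_div_assoc, div_self (ne_of_gt (hPpos n)), mul_one]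
    have he : (D n + M 1 n*K n)/D n = 1 + eps n := by
      have hDne := (hDpos n).ne'
      simp only [hepsdef]
      field_simp
    rw [he]
  have h1eps : Tendsto (fun n => 1 + eps n) atTop (𝓝 1) := by
    refine tendsto_of_tendsto_of_tendsto_of_le_of_le tendsto_const_nhds hratio
      (fun n => by linarith [heps_nn n]) (fun n => ?_)
    rw [hre n]
    nlinarith [heps_nn n]
  have heps0 : Tendsto eps atTop (𝓝 0) := by
    have h2 := h1eps.sub (tendsto_const_nhds (x := (1:ℝ)) (f := atTop))
    simp only [add_sub_cancel_left, sub_self] at h2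
    exact h2
  -- the pair-bound constant C
  set phi : Fin N → ℝ := fun i => (lam i - lam i1)*(lam iN - lam i) with hphidef
  have hphinn : ∀ i, 0 ≤ phi i := by
    intro i
    simp only [hphidef]
    exact mul_nonneg (sub_nonneg.mpr (hl1le i)) (sub_nonneg.mpr (hlleN i))
  have hzeroLHS : ∀ i j : Fin N, (i = i1 ∨ i = iN) → (j = i1 ∨ j = iN) →
      (lam i - lam j)^2*|lam i*lam j - lam i1*lam iN| = 0 := by
    intro i j hi hj
    obtain hi|hi := hi <;> obtain hj|hj := hj <;> subst hi <;> subst hj <;>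
      simp [sub_self, mul_comm]
  have hCex : ∃ C : ℝ, 0 ≤ C ∧ ∀ i j : Fin N,
      (lam i - lam j)^2*|lam i*lam j - lam i1*lam iN| ≤ C*(phi i + phi j) := by
    have hsqb : ∀ i j : Fin N, (lam i - lam j)^2 ≤ (lam iN - lam i1)^2 := by
      intro i j
      nlinarith [hl1le i, hl1le j, hlleN i, hlleN j]
    have habs2 : ∀ i j : Fin N, |lam i*lam j - lam i1*lam iN| ≤ (lam iN)^2 := by
      intro i j
      rw [abs_le]
      constructor
      · nlinarith [hlpos i, hlpos j, hlpos i1, hlpos iN, hl1le i, hl1le j,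
          hlleN i, hlleN j, hl1le iN, hlleN i1]
      · nlinarith [hlpos i, hlpos j, hlpos i1, hlpos iN, hl1le i, hl1le j,
          hlleN i, hlleN j, hl1le iN, hlleN i1]
    by_cases hInt : ∃ k : Fin N, k ≠ i1 ∧ k ≠ iN
    · have hsne : (Finset.univ.filter (fun i : Fin N => i ≠ i1 ∧ i ≠ iN)).Nonempty := by
        obtain ⟨k, hk⟩ := hInt
        exact ⟨k, by simp [hk.1, hk.2]⟩
      obtain ⟨k0, hk0mem, hk0min⟩ :=
        Finset.exists_min_image (Finset.univ.filter (fun i : Fin N => i ≠ i1 ∧ i ≠ iN)) phi hsne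
      have hk0' : k0 ≠ i1 ∧ k0 ≠ iN := by
        have := Finset.mem_filter.mp hk0mem
        exact this.2
      have hc0pos : 0 < phi k0 := by
        simp only [hphidef]
        have h1 : lam i1 < lam k0 :=
          lt_of_le_of_ne (hl1le k0) (fun hc => hk0'.1 (hmono.injective hc.symm))
        have h2 : lam k0 < lam iN :=
          lt_of_le_of_ne (hlleN k0) (fun hc => hk0'.2 (hmono.injective hc))
        nlinarith
      refine ⟨(lam iN - lam i1)^2*(lam iN)^2/phi k0, by positivity, ?_⟩
      intro i j
      by_cases hij : (i = i1 ∨ i = iN) ∧ (j = i1 ∨ j = iN)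
      · rw [hzeroLHS i j hij.1 hij.2]
        have h1 := hphinn i
        have h2 := hphinn j
        positivity
      · have hone : (i ≠ i1 ∧ i ≠ iN) ∨ (j ≠ i1 ∧ j ≠ iN) := by tauto
        have hC0 : (0:ℝ) ≤ (lam iN - lam i1)^2*(lam iN)^2/phi k0 := by positivity
        have hmain : (lam i - lam j)^2*|lam i*lam j - lam i1*lam iN|
            ≤ (lam iN - lam i1)^2*(lam iN)^2 :=
          mul_le_mul (hsqb i j) (habs2 i j) (abs_nonneg _) (by positivity)
        have hsplit : (lam iN - lam i1)^2*(lam iN)^2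
            = ((lam iN - lam i1)^2*(lam iN)^2/phi k0)*phi k0 := by
          field_simp
        obtain hki|hkj := hone
        · have hphige : phi k0 ≤ phi i :=
            hk0min i (Finset.mem_filter.mpr ⟨mem_univ _, hki⟩)
          calc (lam i - lam j)^2*|lam i*lam j - lam i1*lam iN|
              ≤ ((lam iN - lam i1)^2*(lam iN)^2/phi k0)*phi k0 := by
                rw [← hsplit]; exact hmain
            _ ≤ ((lam iN - lam i1)^2*(lam iN)^2/phi k0)*(phi i + phi j) := by
                have := hphinn j
                exact mul_le_mul_of_nonneg_left (by linarith) hC0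
        · have hphige : phi k0 ≤ phi j :=
            hk0min j (Finset.mem_filter.mpr ⟨mem_univ _, hkj⟩)
          calc (lam i - lam j)^2*|lam i*lam j - lam i1*lam iN|
              ≤ ((lam iN - lam i1)^2*(lam iN)^2/phi k0)*phi k0 := by
                rw [← hsplit]; exact hmain
            _ ≤ ((lam iN - lam i1)^2*(lam iN)^2/phi k0)*(phi i + phi j) := by
                have := hphinn i
                exact mul_le_mul_of_nonneg_left (by linarith) hC0
    · push_neg at hInt
      refine ⟨0, le_refl 0, ?_⟩
      intro i j
      have hii : i = i1 ∨ i = iN := by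
        by_cases h : i = i1
        · exact Or.inl h
        · exact Or.inr (hInt i h)
      have hjj : j = i1 ∨ j = iN := by
        by_cases h : j = i1
        · exact Or.inl h
        · exact Or.inr (hInt j h)
      rw [hzeroLHS i j hii hjj, zero_mul]
  obtain ⟨C, hC0, hCkey⟩ := hCex
  have hUDsum : ∀ n, 2*(U n - (lam i1*lam iN)*D n)
      = ∑ i, ∑ j, (W n i*W n j*(lam i*lam j))
          *((lam i - lam j)^2*(lam i*lam j - lam i1*lam iN)) := by
    intro n
    calc 2*(U n - (lam i1*lam iN)*D n) = 2*U n - (lam i1*lam iN)*(2*D n) := by ring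
      _ = (∑ i, ∑ j, W n i*W n j*(lam i*lam j)^2*(lam i - lam j)^2)
          - (lam i1*lam iN)*(∑ i, ∑ j, W n i*W n j*(lam i*lam j)^1*(lam i - lam j)^2) := by
          rw [hUd n, hDd n]
      _ = ∑ i, ∑ j, (W n i*W n j*(lam i*lam j)^2*(lam i - lam j)^2
          - (lam i1*lam iN)*(W n i*W n j*(lam i*lam j)^1*(lam i - lam j)^2)) := by
          simp only [Finset.mul_sum, ← Finset.sum_sub_distrib]
      _ = ∑ i, ∑ j, (W n i*W n j*(lam i*lam j))
          *((lam i - lam j)^2*(lam i*lam j - lam i1*lam iN)) := by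
          exact Finset.sum_congr rfl fun i _ => Finset.sum_congr rfl fun j _ => by ring
  have habs : ∀ n, |U n - (lam i1*lam iN)*D n| ≤ C*(M 1 n*K n) := by
    intro n
    have h1 : |2*(U n - (lam i1*lam iN)*D n)| ≤ 2*(C*(M 1 n*K n)) := by
      rw [hUDsum n]
      have hstep : |∑ i, ∑ j, (W n i*W n j*(lam i*lam j))
          *((lam i - lam j)^2*(lam i*lam j - lam i1*lam iN))|
          ≤ ∑ i, ∑ j, |(W n i*W n j*(lam i*lam j))
          *((lam i - lam j)^2*(lam i*lam j - lam i1*lam iN))| :=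
        (Finset.abs_sum_le_sum_abs _ _).trans
          (Finset.sum_le_sum fun i _ => Finset.abs_sum_le_sum_abs _ _)
      refine le_trans hstep ?_
      have hterm : ∀ i j : Fin N, |(W n i*W n j*(lam i*lam j))
          *((lam i - lam j)^2*(lam i*lam j - lam i1*lam iN))|
          ≤ (W n i*lam i)*(W n j*lam j)*(C*(phi i + phi j)) := by
        intro i j
        rw [abs_mul]
        have hwn1 := hWnn n i
        have hwn2 := hWnn n j
        have hlp1 := (hlpos i).le
        have hlp2 := (hlpos j).le
        have e1 : |W n i*W n j*(lam i*lam j)| = W n i*W n j*(lam i*lam j) :=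
          abs_of_nonneg (by positivity)
        have e2 : |(lam i - lam j)^2*(lam i*lam j - lam i1*lam iN)|
            = (lam i - lam j)^2*|lam i*lam j - lam i1*lam iN| := by
          rw [abs_mul, abs_of_nonneg (sq_nonneg _)]
        rw [e1, e2]
        calc W n i*W n j*(lam i*lam j)*((lam i - lam j)^2*|lam i*lam j - lam i1*lam iN|)
            ≤ W n i*W n j*(lam i*lam j)*(C*(phi i + phi j)) :=
              mul_le_mul_of_nonneg_left (hCkey i j) (by positivity)
          _ = (W n i*lam i)*(W n j*lam j)*(C*(phi i + phi j)) := by ring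
      refine le_trans (Finset.sum_le_sum fun i _ =>
        Finset.sum_le_sum fun j _ => hterm i j) ?_
      have e3 : ∑ i, ∑ j, (W n i*lam i)*(W n j*lam j)*(C*(phi i + phi j))
          = C*(∑ i, ∑ j, (W n i*lam i)*(W n j*lam j)
            *((lam i - lam i1)*(lam iN - lam i) + (lam j - lam i1)*(lam iN - lam j))) := by
        rw [Finset.mul_sum]
        refine Finset.sum_congr rfl fun i _ => ?_
        rw [Finset.mul_sum]
        refine Finset.sum_congr rfl fun j _ => ?_
        simp only [hphidef]
        ring
      rw [e3, hsK n]
      exact le_of_eq (by ring)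
    have h2 : |2*(U n - (lam i1*lam iN)*D n)| = 2*|U n - (lam i1*lam iN)*D n| := by
      rw [abs_mul]
      norm_num
    linarith
  have hepsb : ∀ n, |U n/D n - lam i1*lam iN| ≤ C*eps n := by
    intro n
    have hDne := (hDpos n).ne'
    have e : U n/D n - lam i1*lam iN = (U n - (lam i1*lam iN)*D n)/D n := by
      field_simp
    rw [e, abs_div, abs_of_pos (hDpos n)]
    have e4 : C*eps n = C*(M 1 n*K n)/D n := by
      simp only [hepsdef]
      ring
    rw [e4, div_le_div_iff_of_pos_right (hDpos n)]
    exact habs n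
  have hElim : Tendsto (fun n => U n/D n) atTop (𝓝 (lam i1*lam iN)) := by
    rw [tendsto_iff_dist_tendsto_zero]
    simp only [Real.dist_eq]
    have hC : Tendsto (fun n => C*eps n) atTop (𝓝 0) := by
      simpa using heps0.const_mul C
    exact squeeze_zero (fun n => abs_nonneg _) hepsb hC
  -- the exact identity
  have hident : ∀ n, 1/(alpha n*alpha (n+1)) - M 1 (n+1)/((alpha n)^2*M 1 n) = U n/D n := by
    intro n
    have hDne := (hDpos n).ne'
    have hsne := (hs n).ne'
    have htne := (ht n).ne'
    have hDne' : M 1 n*M 3 n - (M 2 n)^2 ≠ 0 := by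
      have h := hDne
      rw [hDdef] at h
      simpa using h
    have hnum2 : (M 2 n)^3 - 2*M 1 n*M 2 n*M 3 n + (M 1 n)^2*M 4 n ≠ 0 := by
      have hpos : 0 < (M 2 n)^3 - 2*M 1 n*M 2 n*M 3 n + (M 1 n)^2*M 4 n := by
        rw [← he2 n]
        have h1 := ht (n+1)
        have h2 := ht n
        positivity
      exact hpos.ne'
    rw [halST (n+1), halST n, hM1' n, hM2' n]
    simp only [hUdef, hDdef]
    field_simp
    ring
  -- transfer to the goal
  have hcomp : Tendsto (fun n : ℕ => U (n-1)/D (n-1)) atTop (𝓝 (lam i1*lam iN)) :=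
    hElim.comp (tendsto_sub_atTop_nat 1)
  refine Tendsto.congr' ?_ hcomp
  filter_upwards [eventually_ge_atTop 1] with n hn
  obtain ⟨k, rfl⟩ : ∃ k, n = k+1 := ⟨n-1, by omega⟩
  simp only [Nat.add_sub_cancel]
  rw [hsA (k+1), hsA k]
  exact (hident k).symm
end

section
/- Consider the linear system Ax = b where A ∈ ℝ^{N×N} is symmetric positive definite, and let x_* = A⁻¹ b. Fix a positive integer m, real numbers q_1, ..., q_m ≥ 0, and a real number υ > 0. Let the iterates be generated by the gradient method x_{n+1} = x_n − α_n g_n with g_n = A x_n − b and steplength α_n = ((g_{τ(n)}ᵀ A^{ρ(n)} g_{τ(n)})/(g_{τ(n)}ᵀ A^{ρ(n)+υ} g_{τ(n)}))^{1/υ}, where for each n, τ(n) ∈ {max(0, n−m), ..., n} and ρ(n) ∈ {q_1, ..., q_m} are arbitrary choices, and A^s denotes the spectral power of A for real s ≥ 0 (the iteration terminates if some g_n = 0, in which case x_n = x_*). Then the sequence {x_n} converges to x_* for any starting point x_0. -/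
open Filter Topology Matrix

/-- The spectral power `A^s` of a symmetric matrix, defined from an orthonormal
eigendecomposition `(μ, v)` of `A` by raising each eigenvalue to the real power `s`:
`(A^s)_{kl} = Σ_i μ_i^s v_{ik} v_{il}`. -/
noncomputable def spectralPow (N : ℕ) (mu : Fin N → ℝ) (v : Fin N → Fin N → ℝ)
    (s : ℝ) : Matrix (Fin N) (Fin N) ℝ :=
  Matrix.of fun k l => ∑ i, mu i ^ s * v i k * v i l

set_option maxHeartbeats 3200000 in
/-- Convergence of Dai's generalization of the gradient method with retards (DGMR):
the iteration `x_{n+1} = x_n − α_n g_n` with steplength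
`α_n = ((g_{τ(n)}ᵀ A^{ρ(n)} g_{τ(n)})/(g_{τ(n)}ᵀ A^{ρ(n)+υ} g_{τ(n)}))^{1/υ}`,
where `τ(n) ∈ {max(0,n−m),…,n}` and `ρ(n) ∈ {q₁,…,q_m}` with `q_j ≥ 0` and `υ > 0`,
converges to `x_* = A⁻¹ b` from any starting point.  (If some `g_n = 0`, the iterate
is already `x_*` and stays there, since the update `−α_n g_n` then vanishes.) -/
theorem dgmr_converges
    (N : ℕ)
    (A : Matrix (Fin N) (Fin N) ℝ) (b : Fin N → ℝ)
    (hA : A.PosDef)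
    (mu : Fin N → ℝ) (v : Fin N → Fin N → ℝ)
    (heig : ∀ i, A.mulVec (v i) = mu i • v i)
    (horth : ∀ i j, v i ⬝ᵥ v j = if i = j then (1 : ℝ) else 0)
    (m : ℕ) (hm : 0 < m)
    (q : Fin m → ℝ) (hq : ∀ j, 0 ≤ q j)
    (υ : ℝ) (hυ : 0 < υ)
    (τ : ℕ → ℕ) (hτ : ∀ n, n - m ≤ τ n ∧ τ n ≤ n)
    (ρ : ℕ → ℝ) (hρ : ∀ n, ∃ j : Fin m, ρ n = q j)
    (x g : ℕ → Fin N → ℝ) (alpha : ℕ → ℝ)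
    (hg : ∀ n, g n = A.mulVec (x n) - b)
    (halpha : ∀ n, alpha n =
      ((g (τ n) ⬝ᵥ (spectralPow N mu v (ρ n)).mulVec (g (τ n))) /
        (g (τ n) ⬝ᵥ (spectralPow N mu v (ρ n + υ)).mulVec (g (τ n)))) ^ (1 / υ))
    (hx : ∀ n, x (n + 1) = x n - alpha n • g n)
    (xstar : Fin N → ℝ) (hxstar : A.mulVec xstar = b) :
    Tendsto x atTop (𝓝 xstar) := by
  classical
  -- basic facts about the eigensystem
  have hvn : ∀ j, v j ⬝ᵥ v j = 1 := fun j => by simpa using horth j j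
  have hvne : ∀ j, v j ≠ 0 := by
    intro j hj
    have h1 := hvn j
    rw [hj] at h1
    simp [dotProduct] at h1
  have hAsymm : ∀ k l, A k l = A l k := by
    intro k l
    conv_lhs => rw [← hA.1]
    simp [Matrix.conjTranspose_apply]
  have hsym : ∀ w u : Fin N → ℝ, A.mulVec w ⬝ᵥ u = w ⬝ᵥ A.mulVec u := by
    intro w u
    simp only [Matrix.mulVec, dotProduct, Finset.sum_mul, Finset.mul_sum]
    rw [Finset.sum_comm]
    refine Finset.sum_congr rfl fun k _ => Finset.sum_congr rfl fun l _ => ?_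
    rw [hAsymm l k]; ring
  have hmu : ∀ j, 0 < mu j := by
    intro j
    have h2 := hA.dotProduct_mulVec_pos (hvne j)
    have h3 : star (v j) ⬝ᵥ A.mulVec (v j) = mu j := by
      rw [heig j]
      simp [hvn j, star_trivial, smul_eq_mul]
    rwa [h3] at h2
  -- completeness of the eigenbasis
  have hexp : ∀ (w : Fin N → ℝ) (k : Fin N), ∑ j, (w ⬝ᵥ v j) * v j k = w k := by
    intro w k
    set V : Matrix (Fin N) (Fin N) ℝ := Matrix.of fun i k => v i k with hV
    have hVVt : V * Vᵀ = 1 := by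
      ext i j
      simpa [hV, Matrix.mul_apply, Matrix.one_apply, dotProduct] using horth i j
    have hVtV : Vᵀ * V = 1 := mul_eq_one_comm.mp hVVt
    have h1 : ((Vᵀ * V).mulVec w) k = w k := by rw [hVtV, Matrix.one_mulVec]
    calc ∑ j, (w ⬝ᵥ v j) * v j k = ((Vᵀ * V).mulVec w) k := by
          simp only [Matrix.mulVec, dotProduct, Matrix.mul_apply, hV,
            Matrix.transpose_apply, Matrix.of_apply, Finset.sum_mul, Finset.mul_sum]
          rw [Finset.sum_comm]
          exact Finset.sum_congr rfl fun j _ => Finset.sum_congr rfl fun l _ => by ring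
      _ = w k := h1
  -- quadratic form of the spectral power
  have hquad : ∀ (w : Fin N → ℝ) (r : ℝ),
      w ⬝ᵥ (spectralPow N mu v r).mulVec w = ∑ j, mu j ^ r * (w ⬝ᵥ v j) ^ 2 := by
    intro w r
    have hmv : ∀ k, ((spectralPow N mu v r).mulVec w) k
        = ∑ j, (mu j ^ r * (w ⬝ᵥ v j)) * v j k := by
      intro k
      simp only [Matrix.mulVec, dotProduct, spectralPow, Matrix.of_apply,
        Finset.sum_mul, Finset.mul_sum]
      rw [Finset.sum_comm]
      exact Finset.sum_congr rfl fun j _ => Finset.sum_congr rfl fun l _ => by ring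
    calc w ⬝ᵥ (spectralPow N mu v r).mulVec w
        = ∑ k, w k * ∑ j, (mu j ^ r * (w ⬝ᵥ v j)) * v j k :=
          Finset.sum_congr rfl fun k _ => by rw [hmv k]
      _ = ∑ j, (mu j ^ r * (w ⬝ᵥ v j)) * ∑ k, w k * v j k := by
          simp only [Finset.mul_sum]
          rw [Finset.sum_comm]
          exact Finset.sum_congr rfl fun j _ => Finset.sum_congr rfl fun k _ => by ring
      _ = ∑ j, mu j ^ r * (w ⬝ᵥ v j) ^ 2 := Finset.sum_congr rfl fun j _ => by
          rw [show (∑ k, w k * v j k) = w ⬝ᵥ v j from rfl]; ring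
  -- step recurrence for the coefficients
  have hgstep : ∀ n, g (n + 1) = g n - alpha n • A.mulVec (g n) := by
    intro n
    have h1 : A.mulVec (x (n + 1)) - b = (A.mulVec (x n) - b) - alpha n • A.mulVec (g n) := by
      rw [hx n, Matrix.mulVec_sub, Matrix.mulVec_smul]
      abel
    rw [hg (n + 1), h1, ← hg n]
  have hrec : ∀ n j, g (n + 1) ⬝ᵥ v j = (1 - alpha n * mu j) * (g n ⬝ᵥ v j) := by
    intro n j
    rw [hgstep n, sub_dotProduct, smul_dotProduct, hsym (g n) (v j), heig j,
      dotProduct_smul]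
    simp only [smul_eq_mul]
    ring
  -- product formula over a window
  have hprod : ∀ (j : Fin N) (a c : ℕ), a ≤ c →
      g c ⬝ᵥ v j = (∏ l ∈ Finset.Ico a c, (1 - alpha l * mu j)) * (g a ⬝ᵥ v j) := by
    intro j a c hac
    induction c, hac using Nat.le_induction with
    | base => simp
    | succ c hac ih =>
        rw [hrec c j, ih, Finset.prod_Ico_succ_top hac]
        ring
  -- the steplength in coefficient form
  have halpha' : ∀ n, alpha n =
      ((∑ j, mu j ^ (ρ n) * (g (τ n) ⬝ᵥ v j) ^ 2) /
        (∑ j, mu j ^ (ρ n + υ) * (g (τ n) ⬝ᵥ v j) ^ 2)) ^ (1 / υ) := by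
    intro n
    rw [halpha n, hquad, hquad]
  have hsum_nonneg : ∀ (n : ℕ) (r : ℝ), 0 ≤ ∑ j, mu j ^ r * (g n ⬝ᵥ v j) ^ 2 :=
    fun n r => Finset.sum_nonneg fun j _ =>
      mul_nonneg (Real.rpow_nonneg (hmu j).le r) (sq_nonneg _)
  have halpha_nonneg : ∀ n, 0 ≤ alpha n := by
    intro n
    rw [halpha' n]
    exact Real.rpow_nonneg (div_nonneg (hsum_nonneg _ _) (hsum_nonneg _ _)) _
  -- the main convergence of each coefficient, by induction on the eigenvalue
  have main : ∀ i : Fin N,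
      (∀ j : Fin N, mu j < mu i → Tendsto (fun n => g n ⬝ᵥ v j) atTop (𝓝 0)) →
      Tendsto (fun n => g n ⬝ᵥ v i) atTop (𝓝 0) := by
    intro i hIH
    haveI : Nonempty (Fin N) := ⟨i⟩
    haveI : Nonempty (Fin m) := ⟨⟨0, hm⟩⟩
    set lo : ℝ := Finset.univ.inf' Finset.univ_nonempty mu with hlodef
    set hi : ℝ := Finset.univ.sup' Finset.univ_nonempty mu with hhidef
    have hlo_le : ∀ j, lo ≤ mu j := fun j => Finset.inf'_le _ (Finset.mem_univ j)
    have hle_hi : ∀ j, mu j ≤ hi := fun j => Finset.le_sup' _ (Finset.mem_univ j)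
    have hlo_pos : 0 < lo := by
      obtain ⟨j, _, hj⟩ := Finset.exists_mem_eq_inf' (Finset.univ_nonempty) mu
      rw [hlodef, hj]; exact hmu j
    have hhi_pos : 0 < hi := lt_of_lt_of_le (hmu i) (hle_hi i)
    -- upper bound for the steplength
    have halpha_le : ∀ n, alpha n ≤ 1 / lo := by
      intro n
      rw [halpha' n]
      have hratio : (∑ j, mu j ^ (ρ n) * (g (τ n) ⬝ᵥ v j) ^ 2) /
          (∑ j, mu j ^ (ρ n + υ) * (g (τ n) ⬝ᵥ v j) ^ 2) ≤ (1 / lo) ^ υ := by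
        have hterm : ∀ j : Fin N, lo ^ υ * (mu j ^ (ρ n) * (g (τ n) ⬝ᵥ v j) ^ 2)
            ≤ mu j ^ (ρ n + υ) * (g (τ n) ⬝ᵥ v j) ^ 2 := by
          intro j
          rw [Real.rpow_add (hmu j)]
          have h1 : lo ^ υ ≤ mu j ^ υ :=
            Real.rpow_le_rpow hlo_pos.le (hlo_le j) hυ.le
          have h2 : 0 ≤ mu j ^ (ρ n) * (g (τ n) ⬝ᵥ v j) ^ 2 :=
            mul_nonneg (Real.rpow_nonneg (hmu j).le _) (sq_nonneg _)
          nlinarith [mul_le_mul_of_nonneg_left h1 h2]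
        have hsum : lo ^ υ * (∑ j, mu j ^ (ρ n) * (g (τ n) ⬝ᵥ v j) ^ 2)
            ≤ ∑ j, mu j ^ (ρ n + υ) * (g (τ n) ⬝ᵥ v j) ^ 2 := by
          rw [Finset.mul_sum]
          exact Finset.sum_le_sum fun j _ => hterm j
        have hlopow : (0:ℝ) < lo ^ υ := Real.rpow_pos_of_pos hlo_pos υ
        rcases eq_or_lt_of_le (hsum_nonneg (τ n) (ρ n + υ)) with hden | hden
        · have h0 : (∑ j, mu j ^ (ρ n) * (g (τ n) ⬝ᵥ v j) ^ 2) = 0 := by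
            nlinarith [hsum_nonneg (τ n) (ρ n)]
          rw [h0, zero_div]
          exact Real.rpow_nonneg (by positivity) υ
        · rw [div_le_iff₀ (by linarith)]
          calc (∑ j, mu j ^ (ρ n) * (g (τ n) ⬝ᵥ v j) ^ 2)
              = (lo ^ υ)⁻¹ * (lo ^ υ * ∑ j, mu j ^ (ρ n) * (g (τ n) ⬝ᵥ v j) ^ 2) := by
                field_simp
            _ ≤ (lo ^ υ)⁻¹ * ∑ j, mu j ^ (ρ n + υ) * (g (τ n) ⬝ᵥ v j) ^ 2 := by
                apply mul_le_mul_of_nonneg_left hsum (by positivity)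
            _ = (1 / lo) ^ υ * ∑ j, mu j ^ (ρ n + υ) * (g (τ n) ⬝ᵥ v j) ^ 2 := by
                rw [one_div, Real.inv_rpow hlo_pos.le]
      calc ((∑ j, mu j ^ (ρ n) * (g (τ n) ⬝ᵥ v j) ^ 2) /
            (∑ j, mu j ^ (ρ n + υ) * (g (τ n) ⬝ᵥ v j) ^ 2)) ^ (1 / υ)
          ≤ ((1 / lo) ^ υ) ^ (1 / υ) :=
            Real.rpow_le_rpow (div_nonneg (hsum_nonneg _ _) (hsum_nonneg _ _)) hratio
              (by positivity)
        _ = 1 / lo := by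
            rw [← Real.rpow_mul (by positivity : (0:ℝ) ≤ 1 / lo),
              mul_one_div_cancel hυ.ne', Real.rpow_one]
    -- conditional lower bound for the steplength
    have halpha_ge : ∀ n, 0 < (g (τ n) ⬝ᵥ v i) ^ 2 → 1 / hi ≤ alpha n := by
      intro n hpos
      obtain ⟨Snum, hSnum⟩ : ∃ S, S = ∑ j, mu j ^ (ρ n) * (g (τ n) ⬝ᵥ v j) ^ 2 := ⟨_, rfl⟩
      obtain ⟨Sden, hSden⟩ : ∃ S, S = ∑ j, mu j ^ (ρ n + υ) * (g (τ n) ⬝ᵥ v j) ^ 2 := ⟨_, rfl⟩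
      have hα : alpha n = (Snum / Sden) ^ (1 / υ) := by rw [halpha' n, ← hSnum, ← hSden]
      have hSnum_nonneg : 0 ≤ Snum := by rw [hSnum]; exact hsum_nonneg _ _
      have hSden_nonneg : 0 ≤ Sden := by rw [hSden]; exact hsum_nonneg _ _
      have hSnum_pos : 0 < Snum := by
        rw [hSnum]
        have h1 : 0 < mu i ^ (ρ n) * (g (τ n) ⬝ᵥ v i) ^ 2 :=
          mul_pos (Real.rpow_pos_of_pos (hmu i) _) hpos
        have h2 := Finset.single_le_sum
          (f := fun j => mu j ^ (ρ n) * (g (τ n) ⬝ᵥ v j) ^ 2)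
          (fun j _ => mul_nonneg (Real.rpow_nonneg (hmu j).le _) (sq_nonneg _))
          (Finset.mem_univ i)
        exact lt_of_lt_of_le h1 h2
      have hden_le : Sden ≤ hi ^ υ * Snum := by
        rw [hSden, hSnum, Finset.mul_sum]
        apply Finset.sum_le_sum
        intro j _
        rw [Real.rpow_add (hmu j)]
        have h1 : mu j ^ υ ≤ hi ^ υ := Real.rpow_le_rpow (hmu j).le (hle_hi j) hυ.le
        have h2 : 0 ≤ mu j ^ (ρ n) * (g (τ n) ⬝ᵥ v j) ^ 2 :=
          mul_nonneg (Real.rpow_nonneg (hmu j).le _) (sq_nonneg _)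
        nlinarith [mul_le_mul_of_nonneg_left h1 h2]
      have hden_pos : 0 < Sden := by
        rw [hSden]
        have h1 : 0 < mu i ^ (ρ n + υ) * (g (τ n) ⬝ᵥ v i) ^ 2 :=
          mul_pos (Real.rpow_pos_of_pos (hmu i) _) hpos
        have h2 := Finset.single_le_sum
          (f := fun j => mu j ^ (ρ n + υ) * (g (τ n) ⬝ᵥ v j) ^ 2)
          (fun j _ => mul_nonneg (Real.rpow_nonneg (hmu j).le _) (sq_nonneg _))
          (Finset.mem_univ i)
        exact lt_of_lt_of_le h1 h2
      have hratio_ge : (1 / hi) ^ υ ≤ Snum / Sden := by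
        rw [le_div_iff₀ hden_pos]
        have h3 : (1 / hi) ^ υ * Sden ≤ (1 / hi) ^ υ * (hi ^ υ * Snum) :=
          mul_le_mul_of_nonneg_left hden_le (Real.rpow_nonneg (by positivity) _)
        have h4 : (1 / hi) ^ υ * (hi ^ υ * Snum) = Snum := by
          rw [← mul_assoc, ← Real.mul_rpow (by positivity) hhi_pos.le,
            one_div_mul_cancel hhi_pos.ne', Real.one_rpow, one_mul]
        linarith
      rw [hα]
      calc 1 / hi = ((1 / hi) ^ υ) ^ (1 / υ) := by
            rw [← Real.rpow_mul (by positivity), mul_one_div_cancel hυ.ne', Real.rpow_one]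
        _ ≤ (Snum / Sden) ^ (1 / υ) :=
            Real.rpow_le_rpow (Real.rpow_nonneg (by positivity) _) hratio_ge (by positivity)
    -- global bound on the step factor
    obtain ⟨M, hMdef⟩ : ∃ M : ℝ, M = 1 + hi / lo := ⟨_, rfl⟩
    have hM1 : (1 : ℝ) ≤ M := by
      have := div_pos hhi_pos hlo_pos
      rw [hMdef]; linarith
    have hMpos : (0 : ℝ) < M := lt_of_lt_of_le one_pos hM1
    have hstepM : ∀ (n : ℕ) (j : Fin N), |1 - alpha n * mu j| ≤ M := by
      intro n j
      have h1 : 0 ≤ alpha n * mu j := mul_nonneg (halpha_nonneg n) (hmu j).le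
      have h2 : alpha n * mu j ≤ (1 / lo) * hi :=
        mul_le_mul (halpha_le n) (hle_hi j) (hmu j).le (by positivity)
      have h3 : (1 / lo) * hi = hi / lo := by ring
      rw [abs_le, hMdef]
      constructor
      · rw [h3] at h2
        have := div_pos hhi_pos hlo_pos
        linarith
      · have := div_pos hhi_pos hlo_pos
        linarith
    -- window bound
    have hwin : ∀ n, |g n ⬝ᵥ v i| ≤ M ^ m * |g (τ n) ⬝ᵥ v i| := by
      intro n
      rw [hprod i (τ n) n (hτ n).2, abs_mul]
      have h2 : |∏ l ∈ Finset.Ico (τ n) n, (1 - alpha l * mu i)| ≤ M ^ (n - τ n) := by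
        rw [Finset.abs_prod]
        calc ∏ l ∈ Finset.Ico (τ n) n, |1 - alpha l * mu i|
            ≤ ∏ _l ∈ Finset.Ico (τ n) n, M :=
              Finset.prod_le_prod (fun l _ => abs_nonneg _) (fun l _ => hstepM l i)
          _ = M ^ (n - τ n) := by rw [Finset.prod_const, Nat.card_Ico]
      have h3 : M ^ (n - τ n) ≤ M ^ m := by
        apply pow_le_pow_right₀ hM1
        have := (hτ n).1
        omega
      exact mul_le_mul (h2.trans h3) le_rfl (abs_nonneg _) (by positivity)
    -- the contraction constant
    obtain ⟨c, hcdef⟩ : ∃ c : ℝ, c = max (1 - mu i / hi) (1 / 2) := ⟨_, rfl⟩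
    have hc0 : (0 : ℝ) ≤ c := by rw [hcdef]; exact le_trans (by norm_num) (le_max_right _ _)
    have hc1 : c < 1 := by
      rw [hcdef]
      apply max_lt _ (by norm_num)
      have := div_pos (hmu i) hhi_pos
      linarith
    -- lower bound for mu i ^ (ρ n)
    obtain ⟨P, hPdef⟩ : ∃ P : ℝ,
        P = (Finset.univ.image fun t : Fin m => mu i ^ (q t)).min'
          (Finset.univ_nonempty.image _) := ⟨_, rfl⟩
    have hP_pos : 0 < P := by
      have hPmem := Finset.min'_mem (Finset.univ.image fun t : Fin m => mu i ^ (q t))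
        (Finset.univ_nonempty.image _)
      rw [Finset.mem_image] at hPmem
      obtain ⟨t, _, ht⟩ := hPmem
      rw [hPdef, ← ht]
      exact Real.rpow_pos_of_pos (hmu i) _
    have hP_le : ∀ n, P ≤ mu i ^ (ρ n) := by
      intro n
      obtain ⟨t, ht⟩ := hρ n
      rw [ht, hPdef]
      exact Finset.min'_le (Finset.univ.image fun t : Fin m => mu i ^ (q t)) _
        (Finset.mem_image.mpr ⟨t, Finset.mem_univ t, rfl⟩)
    have hthree : (1 : ℝ) < (3 / 2 : ℝ) ^ υ := by
      rw [Real.one_lt_rpow_iff_of_pos (by norm_num)]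
      exact Or.inl ⟨by norm_num, hυ⟩
    -- the set of lower eigenvalues
    obtain ⟨lowF, hlowF⟩ : ∃ s : Finset (Fin N),
        s = Finset.univ.filter fun j => mu j < mu i := ⟨_, rfl⟩
    -- the contraction estimate
    have contract : ∀ ε : ℝ, 0 < ε → ∃ δ : ℝ, 0 < δ ∧ ∀ n,
        (∑ j ∈ lowF, mu j ^ (ρ n) * (g (τ n) ⬝ᵥ v j) ^ 2) ≤ δ →
        ε ≤ (g (τ n) ⬝ᵥ v i) ^ 2 → |1 - alpha n * mu i| ≤ c := by
      intro ε hε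
      refine ⟨P * ε * ((3 / 2 : ℝ) ^ υ - 1),
        mul_pos (mul_pos hP_pos hε) (by linarith), ?_⟩
      intro n hlowsum hbig
      have hbigpos : 0 < (g (τ n) ⬝ᵥ v i) ^ 2 := lt_of_lt_of_le hε hbig
      obtain ⟨Snum, hSnum⟩ : ∃ S, S = ∑ j, mu j ^ (ρ n) * (g (τ n) ⬝ᵥ v j) ^ 2 := ⟨_, rfl⟩
      obtain ⟨Sden, hSden⟩ : ∃ S, S = ∑ j, mu j ^ (ρ n + υ) * (g (τ n) ⬝ᵥ v j) ^ 2 := ⟨_, rfl⟩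
      have hα : alpha n = (Snum / Sden) ^ (1 / υ) := by rw [halpha' n, ← hSnum, ← hSden]
      have hSnum_nonneg : 0 ≤ Snum := by rw [hSnum]; exact hsum_nonneg _ _
      have hSden_nonneg : 0 ≤ Sden := by rw [hSden]; exact hsum_nonneg _ _
      have hden_ge : mu i ^ (ρ n + υ) * ε ≤ Sden := by
        rw [hSden]
        calc mu i ^ (ρ n + υ) * ε ≤ mu i ^ (ρ n + υ) * (g (τ n) ⬝ᵥ v i) ^ 2 :=
              mul_le_mul_of_nonneg_left hbig (Real.rpow_nonneg (hmu i).le _)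
          _ ≤ _ := Finset.single_le_sum
              (f := fun j => mu j ^ (ρ n + υ) * (g (τ n) ⬝ᵥ v j) ^ 2)
              (fun j _ => mul_nonneg (Real.rpow_nonneg (hmu j).le _) (sq_nonneg _))
              (Finset.mem_univ i)
      have hden_pos : 0 < Sden :=
        lt_of_lt_of_le (mul_pos (Real.rpow_pos_of_pos (hmu i) _) hε) hden_ge
      -- splitting the numerator
      obtain ⟨Slow, hSlowdef⟩ : ∃ S, S = ∑ j ∈ lowF,
          mu j ^ (ρ n) * (g (τ n) ⬝ᵥ v j) ^ 2 := ⟨_, rfl⟩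
      obtain ⟨Srest, hSrestdef⟩ : ∃ S, S = ∑ j ∈ Finset.univ.filter fun j => ¬ mu j < mu i,
          mu j ^ (ρ n) * (g (τ n) ⬝ᵥ v j) ^ 2 := ⟨_, rfl⟩
      rw [← hSlowdef] at hlowsum
      have hsplit : Slow + Srest = Snum := by
        rw [hSlowdef, hSrestdef, hSnum, hlowF]
        exact Finset.sum_filter_add_sum_filter_not _ _ _
      have hrest : mu i ^ υ * Srest ≤ Sden := by
        rw [hSrestdef, Finset.mul_sum, hSden]
        calc ∑ j ∈ Finset.univ.filter fun j => ¬ mu j < mu i,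
              mu i ^ υ * (mu j ^ (ρ n) * (g (τ n) ⬝ᵥ v j) ^ 2)
            ≤ ∑ j ∈ Finset.univ.filter fun j => ¬ mu j < mu i,
              mu j ^ (ρ n + υ) * (g (τ n) ⬝ᵥ v j) ^ 2 := by
              apply Finset.sum_le_sum
              intro j hj
              have hji : mu i ≤ mu j := not_lt.mp (Finset.mem_filter.mp hj).2
              rw [Real.rpow_add (hmu j)]
              have h1 : mu i ^ υ ≤ mu j ^ υ := Real.rpow_le_rpow (hmu i).le hji hυ.le
              have h2 : 0 ≤ mu j ^ (ρ n) * (g (τ n) ⬝ᵥ v j) ^ 2 :=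
                mul_nonneg (Real.rpow_nonneg (hmu j).le _) (sq_nonneg _)
              nlinarith [mul_le_mul_of_nonneg_left h1 h2]
          _ ≤ _ := Finset.sum_le_sum_of_subset_of_nonneg (Finset.filter_subset _ _)
              (fun j _ _ => mul_nonneg (Real.rpow_nonneg (hmu j).le _) (sq_nonneg _))
      have hmuvpos : (0 : ℝ) < mu i ^ υ := Real.rpow_pos_of_pos (hmu i) _
      -- numerator bound
      have hfrac : Snum / Sden * mu i ^ υ ≤ (3 / 2 : ℝ) ^ υ := by
        rw [div_mul_eq_mul_div, div_le_iff₀ hden_pos]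
        have e1 : mu i ^ υ * P ≤ mu i ^ (ρ n + υ) := by
          rw [Real.rpow_add (hmu i)]
          calc mu i ^ υ * P ≤ mu i ^ υ * mu i ^ (ρ n) :=
                mul_le_mul_of_nonneg_left (hP_le n) hmuvpos.le
            _ = mu i ^ (ρ n) * mu i ^ υ := mul_comm _ _
        have e2 : mu i ^ υ * (P * ε * ((3 / 2 : ℝ) ^ υ - 1)) ≤
            ((3 / 2 : ℝ) ^ υ - 1) * Sden := by
          calc mu i ^ υ * (P * ε * ((3 / 2 : ℝ) ^ υ - 1))
              = (mu i ^ υ * P) * ε * ((3 / 2 : ℝ) ^ υ - 1) := by ring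
            _ ≤ mu i ^ (ρ n + υ) * ε * ((3 / 2 : ℝ) ^ υ - 1) := by
                apply mul_le_mul_of_nonneg_right
                  (mul_le_mul_of_nonneg_right e1 hε.le) (by linarith)
            _ ≤ Sden * ((3 / 2 : ℝ) ^ υ - 1) :=
                mul_le_mul_of_nonneg_right hden_ge (by linarith)
            _ = ((3 / 2 : ℝ) ^ υ - 1) * Sden := mul_comm _ _
        have e4 : mu i ^ υ * Slow ≤ mu i ^ υ * (P * ε * ((3 / 2 : ℝ) ^ υ - 1)) :=
          mul_le_mul_of_nonneg_left hlowsum hmuvpos.le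
        have e3 : mu i ^ υ * Snum ≤ mu i ^ υ * (P * ε * ((3 / 2 : ℝ) ^ υ - 1)) + Sden := by
          calc mu i ^ υ * Snum = mu i ^ υ * Slow + mu i ^ υ * Srest := by
                rw [← hsplit]; ring
            _ ≤ _ := add_le_add e4 hrest
        linarith [e2, e3]
      have hαmu : alpha n * mu i ≤ 3 / 2 := by
        have hmuid : (mu i ^ υ) ^ (1 / υ) = mu i := by
          rw [← Real.rpow_mul (hmu i).le, mul_one_div_cancel hυ.ne', Real.rpow_one]
        have h1 : alpha n * mu i = (Snum / Sden * mu i ^ υ) ^ (1 / υ) := by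
          conv_rhs => rw [Real.mul_rpow (div_nonneg hSnum_nonneg hSden_nonneg)
            hmuvpos.le, hmuid]
          rw [hα]
        rw [h1]
        calc (Snum / Sden * mu i ^ υ) ^ (1 / υ) ≤ ((3 / 2 : ℝ) ^ υ) ^ (1 / υ) :=
              Real.rpow_le_rpow
                (mul_nonneg (div_nonneg hSnum_nonneg hSden_nonneg) hmuvpos.le)
                hfrac (by positivity)
          _ = 3 / 2 := by
              rw [← Real.rpow_mul (by norm_num), mul_one_div_cancel hυ.ne', Real.rpow_one]
      have hαmu_ge : mu i / hi ≤ alpha n * mu i := by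
        have h6 := halpha_ge n hbigpos
        calc mu i / hi = (1 / hi) * mu i := by ring
          _ ≤ alpha n * mu i := mul_le_mul_of_nonneg_right h6 (hmu i).le
      rw [abs_le]
      constructor
      · have h7 : (1 : ℝ) / 2 ≤ c := by rw [hcdef]; exact le_max_right _ _
        linarith
      · have h8 : 1 - mu i / hi ≤ c := by rw [hcdef]; exact le_max_left _ _
        linarith
    -- the low-eigenvalue part of the quadratic form vanishes asymptotically
    have hτtend : Tendsto τ atTop atTop :=
      tendsto_atTop_mono (fun n => (hτ n).1) (tendsto_sub_atTop_nat m)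
    have hCj : ∀ j : Fin N, ∃ C : ℝ, 0 < C ∧ ∀ n, mu j ^ (ρ n) ≤ C := by
      intro j
      refine ⟨(Finset.univ.image fun t : Fin m => mu j ^ (q t)).max'
        (Finset.univ_nonempty.image _), ?_, ?_⟩
      · have hmem := Finset.max'_mem (Finset.univ.image fun t : Fin m => mu j ^ (q t))
          (Finset.univ_nonempty.image _)
        rw [Finset.mem_image] at hmem
        obtain ⟨t, _, ht⟩ := hmem
        rw [← ht]
        exact Real.rpow_pos_of_pos (hmu j) _
      · intro n
        obtain ⟨t, ht⟩ := hρ n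
        rw [ht]
        exact Finset.le_max' (Finset.univ.image fun t : Fin m => mu j ^ (q t)) _
          (Finset.mem_image.mpr ⟨t, Finset.mem_univ t, rfl⟩)
    choose C hCpos hCle using hCj
    have hlowtend : Tendsto (fun n => ∑ j ∈ lowF, C j * (g (τ n) ⬝ᵥ v j) ^ 2)
        atTop (𝓝 0) := by
      have h0 : ∀ j ∈ lowF, Tendsto (fun n => C j * (g (τ n) ⬝ᵥ v j) ^ 2) atTop (𝓝 0) := by
        intro j hj
        have hj' : mu j < mu i := by
          rw [hlowF] at hj
          exact (Finset.mem_filter.mp hj).2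
        have h1 : Tendsto (fun n => g (τ n) ⬝ᵥ v j) atTop (𝓝 0) := (hIH j hj').comp hτtend
        have h2 : Tendsto (fun n => (g (τ n) ⬝ᵥ v j) ^ 2) atTop (𝓝 0) := by
          simpa using h1.pow 2
        simpa using h2.const_mul (C j)
      have := tendsto_finset_sum lowF h0
      simpa using this
    have hlowev : ∀ δ : ℝ, 0 < δ → ∃ K, ∀ n ≥ K,
        (∑ j ∈ lowF, mu j ^ (ρ n) * (g (τ n) ⬝ᵥ v j) ^ 2) ≤ δ := by
      intro δ hδ
      obtain ⟨K, hK⟩ := eventually_atTop.mp (hlowtend.eventually_lt_const hδ)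
      refine ⟨K, fun n hn => ?_⟩
      have h2 : (∑ j ∈ lowF, mu j ^ (ρ n) * (g (τ n) ⬝ᵥ v j) ^ 2)
          ≤ ∑ j ∈ lowF, C j * (g (τ n) ⬝ᵥ v j) ^ 2 :=
        Finset.sum_le_sum fun j _ => mul_le_mul_of_nonneg_right (hCle j n) (sq_nonneg _)
      exact h2.trans (hK n hn).le
    -- the ε–argument
    rw [Metric.tendsto_atTop]
    intro E hE
    have hden2 : (0 : ℝ) < 2 * M ^ (m + 1) := mul_pos two_pos (pow_pos hMpos _)
    obtain ⟨ε, hεdef⟩ : ∃ ε : ℝ, ε = (E / (2 * M ^ (m + 1))) ^ 2 := ⟨_, rfl⟩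
    have hεpos : 0 < ε := by rw [hεdef]; exact pow_pos (div_pos hE hden2) 2
    have hsq : Real.sqrt ε = E / (2 * M ^ (m + 1)) := by
      rw [hεdef, Real.sqrt_sq (div_pos hE hden2).le]
    obtain ⟨δ, hδpos, hδ⟩ := contract ε hεpos
    obtain ⟨K, hK⟩ := hlowev δ hδpos
    have hdich : ∀ n, K ≤ n → |g (n + 1) ⬝ᵥ v i| ≤ max (c * |g n ⬝ᵥ v i|) (E / 2) := by
      intro n hn
      by_cases hcase : (g (τ n) ⬝ᵥ v i) ^ 2 ≤ ε
      · refine le_trans ?_ (le_max_right _ _)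
        have h1 : |g (τ n) ⬝ᵥ v i| ≤ Real.sqrt ε := by
          rw [← Real.sqrt_sq_eq_abs]
          exact Real.sqrt_le_sqrt hcase
        have h2 : |g n ⬝ᵥ v i| ≤ M ^ m * Real.sqrt ε :=
          (hwin n).trans (mul_le_mul_of_nonneg_left h1 (by positivity))
        have h3 : |g (n + 1) ⬝ᵥ v i| = |1 - alpha n * mu i| * |g n ⬝ᵥ v i| := by
          rw [hrec n i, abs_mul]
        calc |g (n + 1) ⬝ᵥ v i| ≤ M * (M ^ m * Real.sqrt ε) := by
              rw [h3]
              exact mul_le_mul (hstepM n i) h2 (abs_nonneg _) hMpos.le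
          _ = M ^ (m + 1) * Real.sqrt ε := by ring
          _ = E / 2 := by
              rw [hsq]
              field_simp
      · push_neg at hcase
        refine le_trans ?_ (le_max_left _ _)
        have h4 := hδ n (hK n hn) hcase.le
        rw [hrec n i, abs_mul]
        exact mul_le_mul_of_nonneg_right h4 (abs_nonneg _)
    have hiter : ∀ t, |g (K + t) ⬝ᵥ v i| ≤ max (c ^ t * |g K ⬝ᵥ v i|) (E / 2) := by
      intro t
      induction t with
      | zero => simp
      | succ t ih =>
          have h5 := hdich (K + t) (Nat.le_add_right _ _)
          rw [show K + (t + 1) = (K + t) + 1 from rfl]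
          refine h5.trans (max_le ?_ (le_max_right _ _))
          have h6 : c * |g (K + t) ⬝ᵥ v i| ≤ c * max (c ^ t * |g K ⬝ᵥ v i|) (E / 2) :=
            mul_le_mul_of_nonneg_left ih hc0
          refine h6.trans ?_
          rw [mul_max_of_nonneg _ _ hc0]
          apply max_le
          · apply le_max_of_le_left
            rw [pow_succ]
            exact le_of_eq (by ring)
          · apply le_max_of_le_right
            nlinarith
    have hfin : Tendsto (fun t => c ^ t * |g K ⬝ᵥ v i|) atTop (𝓝 0) := by
      simpa using (tendsto_pow_atTop_nhds_zero_of_lt_one hc0 hc1).mul_const |g K ⬝ᵥ v i|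
    obtain ⟨T, hT⟩ := eventually_atTop.mp (hfin.eventually_lt_const (by linarith : (0:ℝ) < E / 2))
    refine ⟨K + T, fun n hn => ?_⟩
    have h8 : |g n ⬝ᵥ v i| ≤ max (c ^ (n - K) * |g K ⬝ᵥ v i|) (E / 2) := by
      have := hiter (n - K)
      rwa [show K + (n - K) = n from by omega] at this
    have h9 : c ^ (n - K) * |g K ⬝ᵥ v i| < E / 2 := hT (n - K) (by omega)
    rw [Real.dist_eq, sub_zero]
    have h10 : max (c ^ (n - K) * |g K ⬝ᵥ v i|) (E / 2) ≤ E / 2 := max_le h9.le le_rfl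
    linarith [h8.trans h10]
  -- strong induction over the eigenvalues
  have hall : ∀ (k : ℕ) (i : Fin N), (Finset.univ.filter fun j => mu j < mu i).card ≤ k →
      Tendsto (fun n => g n ⬝ᵥ v i) atTop (𝓝 0) := by
    intro k
    induction k with
    | zero =>
        intro i hcard
        apply main i
        intro j hj
        exfalso
        have hmem : j ∈ Finset.univ.filter fun l => mu l < mu i :=
          Finset.mem_filter.mpr ⟨Finset.mem_univ j, hj⟩
        have h1 : (Finset.univ.filter fun l => mu l < mu i) = ∅ :=
          Finset.card_eq_zero.mp (Nat.le_zero.mp hcard)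
        rw [h1] at hmem
        exact absurd hmem (Finset.notMem_empty j)
    | succ k ih =>
        intro i hcard
        apply main i
        intro j hj
        apply ih j
        have hsubset : (Finset.univ.filter fun l => mu l < mu j)
            ⊆ Finset.univ.filter fun l => mu l < mu i := by
          intro l hl
          rw [Finset.mem_filter] at hl ⊢
          exact ⟨hl.1, hl.2.trans hj⟩
        have hss : (Finset.univ.filter fun l => mu l < mu j)
            ⊂ Finset.univ.filter fun l => mu l < mu i :=
          (Finset.ssubset_iff_of_subset hsubset).mpr
            ⟨j, Finset.mem_filter.mpr ⟨Finset.mem_univ j, hj⟩, by simp⟩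
        have := Finset.card_lt_card hss
        omega
  have htend : ∀ j, Tendsto (fun n => g n ⬝ᵥ v j) atTop (𝓝 0) := fun j => hall _ j le_rfl
  -- conclude convergence of the iterates
  have hge : ∀ n, g n = A.mulVec (x n - xstar) := fun n => by
    rw [hg n, Matrix.mulVec_sub, hxstar]
  have hcoef : ∀ n j, (x n - xstar) ⬝ᵥ v j = (mu j)⁻¹ * (g n ⬝ᵥ v j) := by
    intro n j
    have h1 : g n ⬝ᵥ v j = mu j * ((x n - xstar) ⬝ᵥ v j) := by
      rw [hge n, hsym (x n - xstar) (v j), heig j, dotProduct_smul, smul_eq_mul]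
    rw [h1, inv_mul_cancel_left₀ (hmu j).ne']
  have herr : ∀ j, Tendsto (fun n => (x n - xstar) ⬝ᵥ v j) atTop (𝓝 0) := by
    intro j
    have h1 := (htend j).const_mul (mu j)⁻¹
    simp only [mul_zero] at h1
    exact h1.congr fun n => (hcoef n j).symm
  rw [tendsto_pi_nhds]
  intro k
  have h2 : Tendsto (fun n => ∑ j, ((x n - xstar) ⬝ᵥ v j) * v j k) atTop (𝓝 0) := by
    have h3 := tendsto_finset_sum Finset.univ (fun j _ => (herr j).mul_const (v j k))
    simpa using h3
  have h4 : Tendsto (fun n => x n k - xstar k) atTop (𝓝 0) := by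
    refine h2.congr fun n => ?_
    rw [hexp (x n - xstar) k]
    simp
  have h5 := h4.add_const (xstar k)
  simpa using h5
end

section
/- Consider the linear system Ax = b where A ∈ ℝ^{N×N} is symmetric positive definite, and let x_* = A⁻¹ b. Fix integers d_1, d_2 ≥ 1 and a constant θ ∈ (0,1). Let the iterates be generated by x_{n+1} = x_n − α_n g_n with g_n = A x_n − b and the AOA steplength: α_n = α_n^AO = ‖g_n‖/‖A g_n‖ if n mod (d_1+d_2) < d_1; α_n = θ α_n^AO if n mod (d_1+d_2) = d_1; and α_n = α_{n−1} otherwise (the iteration terminates if some g_n = 0, in which case x_n = x_*). Then the sequence {x_n} converges to x_* for any starting point x_0. -/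
set_option maxHeartbeats 1600000

open Filter Topology Matrix

/-- If `a (n+1) ≤ max (ρ * a n) (b n)` with `0 ≤ ρ < 1`, `a ≥ 0` and `b → 0`,
then `a → 0`. -/
lemma aoa_max_rec {a b : ℕ → ℝ} {ρ : ℝ} (hρ0 : 0 ≤ ρ) (hρ1 : ρ < 1)
    (ha : ∀ n, 0 ≤ a n) (hb : Tendsto b atTop (𝓝 0))
    (hrec : ∀ n, a (n + 1) ≤ max (ρ * a n) (b n)) :
    Tendsto a atTop (𝓝 0) := by
  rw [Metric.tendsto_atTop]
  intro ε hε
  have hε2 : 0 < ε / 2 := by linarith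
  obtain ⟨N1, hN1⟩ := (Metric.tendsto_atTop.1 hb) (ε / 2) hε2
  have hbN : ∀ n ≥ N1, b n ≤ ε / 2 := by
    intro n hn
    have := hN1 n hn
    rw [Real.dist_eq, sub_zero] at this
    exact le_of_lt (lt_of_abs_lt this)
  have key : ∀ k, a (N1 + k) ≤ max (ρ ^ k * a N1) (ε / 2) := by
    intro k
    induction k with
    | zero => simp [le_max_left, ha]
    | succ k ih =>
      have h1 : a (N1 + (k + 1)) ≤ max (ρ * a (N1 + k)) (b (N1 + k)) := hrec (N1 + k)
      have h2 : ρ * a (N1 + k) ≤ max (ρ ^ (k + 1) * a N1) (ε / 2) := by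
        have h4 := mul_le_mul_of_nonneg_left ih hρ0
        rw [mul_max_of_nonneg _ _ hρ0] at h4
        refine h4.trans (max_le_max (le_of_eq (by ring)) ?_)
        have : ρ * (ε / 2) ≤ 1 * (ε / 2) := mul_le_mul_of_nonneg_right hρ1.le (by linarith)
        linarith
      have h3 : b (N1 + k) ≤ ε / 2 := hbN _ (Nat.le_add_right _ _)
      calc a (N1 + (k+1)) ≤ max (ρ * a (N1 + k)) (b (N1 + k)) := h1
        _ ≤ max (max (ρ ^ (k + 1) * a N1) (ε / 2)) (ε / 2) := max_le_max h2 h3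
        _ = max (ρ ^ (k + 1) * a N1) (ε / 2) := by rw [max_assoc, max_self]
  have hpow : Tendsto (fun k => ρ ^ k * a N1) atTop (𝓝 0) := by
    simpa using (tendsto_pow_atTop_nhds_zero_of_lt_one hρ0 hρ1).mul_const (a N1)
  obtain ⟨K, hK⟩ := (Metric.tendsto_atTop.1 hpow) (ε / 2) hε2
  refine ⟨N1 + K, fun n hn => ?_⟩
  have hk : ∃ k, n = N1 + k ∧ K ≤ k := ⟨n - N1, by omega, by omega⟩
  obtain ⟨k, rfl, hKk⟩ := hk
  have h1 := key k
  have h2 := hK k hKk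
  rw [Real.dist_eq, sub_zero] at h2 ⊢
  have h3 : ρ ^ k * a N1 < ε / 2 := lt_of_abs_lt h2
  rw [abs_of_nonneg (ha _)]
  calc a (N1 + k) ≤ max (ρ ^ k * a N1) (ε / 2) := h1
    _ < ε := by rcases max_cases (ρ ^ k * a N1) (ε / 2) with ⟨h, _⟩ | ⟨h, _⟩ <;> rw [h] <;> linarith

/-- Core convergence lemma for the AOA iteration, written in the eigencoordinates of `A`:
the coordinates `c n i` of the gradient evolve by `c (n+1) i = (1 - α_n λ_i) * c n i`,
where every steplength `α_n` is either the AO steplength `β_n` for the current gradient,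
or `θ β_m` for some recent index `m` (at distance `< d2`).  Every coordinate tends to `0`. -/
lemma aoa_coord {N : ℕ} (lam : Fin N → ℝ) (lmin lmax : ℝ)
    (hlmin : 0 < lmin) (hmem : ∀ i, lam i ∈ Set.Icc lmin lmax)
    (θ : ℝ) (hθ0 : 0 < θ) (hθ1 : θ < 1)
    (d2 : ℕ) (hd2 : 1 ≤ d2)
    (c : ℕ → Fin N → ℝ) (alpha beta : ℕ → ℝ)
    (hrec : ∀ n i, c (n + 1) i = (1 - alpha n * lam i) * c n i)
    (hbeta : ∀ n, beta n =
      Real.sqrt (∑ i, (c n i) ^ 2) / Real.sqrt (∑ i, (lam i) ^ 2 * (c n i) ^ 2))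
    (hne : ∀ n, ∃ i, c n i ≠ 0)
    (halpha : ∀ n, ∃ m, m ≤ n ∧ n < m + d2 ∧
      (alpha n = beta n ∨ alpha n = θ * beta m)) :
    ∀ i, Tendsto (fun n => c n i) atTop (𝓝 0) := by
  have hlam0 : ∀ i, 0 < lam i := fun i => hlmin.trans_le (hmem i).1
  set P : ℕ → ℝ := fun n => ∑ i, (c n i) ^ 2 with hP
  set Q : ℕ → ℝ := fun n => ∑ i, (lam i) ^ 2 * (c n i) ^ 2 with hQ
  have hPpos : ∀ n, 0 < P n := by
    intro n; obtain ⟨i, hi⟩ := hne n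
    exact Finset.sum_pos' (fun j _ => sq_nonneg _) ⟨i, Finset.mem_univ i, by positivity⟩
  have hQpos : ∀ n, 0 < Q n := by
    intro n; obtain ⟨i, hi⟩ := hne n
    refine Finset.sum_pos' (fun j _ => by positivity) ⟨i, Finset.mem_univ i, ?_⟩
    have := hlam0 i; positivity
  have hlmax0 : 0 < lmax := by
    obtain ⟨i, _⟩ := hne 0
    exact hlmin.trans_le ((hmem i).1.trans (hmem i).2)
  have hQle : ∀ n, Q n ≤ lmax ^ 2 * P n := by
    intro n
    rw [Finset.mul_sum]
    refine Finset.sum_le_sum fun j _ => ?_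
    have h1 := (hmem j).2
    have h2 := hlam0 j
    have h3 : lam j ^ 2 ≤ lmax ^ 2 := by nlinarith
    exact mul_le_mul_of_nonneg_right h3 (sq_nonneg _)
  have hQge : ∀ n, lmin ^ 2 * P n ≤ Q n := by
    intro n
    rw [Finset.mul_sum]
    refine Finset.sum_le_sum fun j _ => ?_
    have h1 := (hmem j).1
    have h3 : lmin ^ 2 ≤ lam j ^ 2 := by nlinarith
    exact mul_le_mul_of_nonneg_right h3 (sq_nonneg _)
  -- bounds on beta
  have hbpos : ∀ n, 0 < beta n := by
    intro n; rw [hbeta n]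
    exact div_pos (Real.sqrt_pos.2 (hPpos n)) (Real.sqrt_pos.2 (hQpos n))
  have hblo : ∀ n, 1 / lmax ≤ beta n := by
    intro n; rw [hbeta n]
    rw [div_le_div_iff₀ hlmax0 (Real.sqrt_pos.2 (hQpos n))]
    -- sqrt Q ≤ lmax * sqrt P  ⟺  1 * sqrt Q ≤ sqrt P * lmax
    rw [one_mul]
    have : Real.sqrt (Q n) ≤ Real.sqrt (lmax ^ 2 * P n) := Real.sqrt_le_sqrt (hQle n)
    rw [Real.sqrt_mul (by positivity), Real.sqrt_sq hlmax0.le] at this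
    linarith [this]
  have hbhi : ∀ n, beta n ≤ 1 / lmin := by
    intro n; rw [hbeta n]
    rw [div_le_div_iff₀ (Real.sqrt_pos.2 (hQpos n)) hlmin]
    have : Real.sqrt (lmin ^ 2 * P n) ≤ Real.sqrt (Q n) := Real.sqrt_le_sqrt (hQge n)
    rw [Real.sqrt_mul (by positivity), Real.sqrt_sq hlmin.le] at this
    nlinarith [this]
  -- bounds on alpha
  have halo : ∀ n, θ / lmax ≤ alpha n := by
    intro n
    obtain ⟨m, _, _, hc⟩ := halpha n
    rcases hc with h | h <;> rw [h]
    · calc θ / lmax ≤ 1 / lmax := by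
            have h1 : θ * lmax ≤ 1 * lmax := by nlinarith
            rw [div_le_div_iff₀ hlmax0 hlmax0]; linarith
          _ ≤ beta n := hblo n
    · calc θ / lmax = θ * (1 / lmax) := by ring
        _ ≤ θ * beta m := by nlinarith [hblo m]
  have hahi : ∀ n, alpha n ≤ 1 / lmin := by
    intro n
    obtain ⟨m, _, _, hc⟩ := halpha n
    rcases hc with h | h <;> rw [h]
    · exact hbhi n
    · calc θ * beta m ≤ 1 * beta m := by nlinarith [hbpos m]
        _ ≤ 1 / lmin := by rw [one_mul]; exact hbhi m
  have hanonneg : ∀ n, 0 ≤ alpha n := by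
    intro n
    have := halo n
    have : 0 < θ / lmax := div_pos hθ0 hlmax0
    linarith [halo n]
  -- the "bad time" inequality, for a fixed index i
  have hbad : ∀ i m, 3 / (2 * lam i) < beta m →
      (c m i) ^ 2 ≤ ∑ j ∈ Finset.univ.filter (fun j => lam j < 2 / 3 * lam i), (c m j) ^ 2 := by
    intro i m hb
    set cs := 3 / (2 * lam i) with hcs
    have hcs0 : 0 < cs := by
      have := hlam0 i; rw [hcs]; positivity
    -- from beta m > cs : P m > cs^2 * Q m
    have hPQ : cs ^ 2 * Q m < P m := by
      have hq0 : 0 < Real.sqrt (Q m) := Real.sqrt_pos.2 (hQpos m)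
      rw [hbeta m, lt_div_iff₀ hq0] at hb
      have hsq := mul_lt_mul'' hb hb (by positivity) (by positivity)
      calc cs ^ 2 * Q m = (cs * Real.sqrt (Q m)) * (cs * Real.sqrt (Q m)) := by
            rw [show (cs * Real.sqrt (Q m)) * (cs * Real.sqrt (Q m))
              = (cs * cs) * (Real.sqrt (Q m) * Real.sqrt (Q m)) by ring,
              Real.mul_self_sqrt (hQpos m).le]; ring
        _ < Real.sqrt (P m) * Real.sqrt (P m) := hsq
        _ = P m := Real.mul_self_sqrt (hPpos m).le
    have hsplit : P m - cs ^ 2 * Q m = ∑ j, (1 - cs ^ 2 * lam j ^ 2) * (c m j) ^ 2 := by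
      simp only [hP, hQ, Finset.mul_sum, ← Finset.sum_sub_distrib]
      refine Finset.sum_congr rfl fun j _ => by ring
    set J := Finset.univ.filter (fun j => lam j < 2 / 3 * lam i) with hJ
    have hsum := Finset.sum_filter_add_sum_filter_not Finset.univ
      (fun j => lam j < 2 / 3 * lam i) (fun j => (1 - cs ^ 2 * lam j ^ 2) * (c m j) ^ 2)
    have hJle : ∑ j ∈ J, (1 - cs ^ 2 * lam j ^ 2) * (c m j) ^ 2 ≤ ∑ j ∈ J, (c m j) ^ 2 := by
      refine Finset.sum_le_sum fun j _ => ?_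
      have h1 : 0 ≤ cs ^ 2 * lam j ^ 2 := by positivity
      nlinarith [sq_nonneg (c m j)]
    have hiJ : i ∈ Finset.univ.filter (fun j => ¬ (lam j < 2 / 3 * lam i)) := by
      simp only [Finset.mem_filter, Finset.mem_univ, true_and, not_lt]
      nlinarith [hlam0 i]
    have hcsl : cs * lam i = 3 / 2 := by
      have hl := (hlam0 i).ne'
      rw [hcs]; field_simp
    have hJc : ∑ j ∈ Finset.univ.filter (fun j => ¬ (lam j < 2 / 3 * lam i)),
        (1 - cs ^ 2 * lam j ^ 2) * (c m j) ^ 2 ≤ (1 - cs ^ 2 * lam i ^ 2) * (c m i) ^ 2 := by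
      rw [← Finset.add_sum_erase _ _ hiJ]
      have : ∑ j ∈ (Finset.univ.filter (fun j => ¬ (lam j < 2 / 3 * lam i))).erase i,
          (1 - cs ^ 2 * lam j ^ 2) * (c m j) ^ 2 ≤ 0 := by
        refine Finset.sum_nonpos fun j hj => ?_
        have hj2 := Finset.mem_of_mem_erase hj
        simp only [Finset.mem_filter, Finset.mem_univ, true_and, not_lt] at hj2
        have h23 : 2 / 3 * lam i ≤ lam j := hj2
        have hl0 := hlam0 i
        have : 1 ≤ cs * lam j := by
          rw [hcs]
          rw [div_mul_eq_mul_div, le_div_iff₀ (by positivity)]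
          linarith
        have h2 : 1 ≤ cs ^ 2 * lam j ^ 2 := by nlinarith
        nlinarith [sq_nonneg (c m j)]
      linarith
    have hfin : 0 < (∑ j ∈ J, (c m j) ^ 2) + (1 - cs ^ 2 * lam i ^ 2) * (c m i) ^ 2 := by
      have h0 : 0 < P m - cs ^ 2 * Q m := by linarith
      rw [hsplit] at h0
      rw [← hsum] at h0
      have := hJle
      linarith
    have h94 : cs ^ 2 * lam i ^ 2 = 9 / 4 := by
      have : cs ^ 2 * lam i ^ 2 = (cs * lam i) ^ 2 := by ring
      rw [this, hcsl]; norm_num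
    rw [h94] at hfin
    nlinarith [hfin]
  -- main induction on the number of smaller eigenvalues
  suffices key : ∀ k : ℕ, ∀ i : Fin N,
      (Finset.univ.filter (fun j => lam j < lam i)).card < k →
      Tendsto (fun n => c n i) atTop (𝓝 0) by
    intro i
    exact key ((Finset.univ.filter (fun j => lam j < lam i)).card + 1) i (Nat.lt_succ_self _)
  intro k
  induction k with
  | zero => intro i hi; omega
  | succ k ih =>
    intro i hcard
    have IH : ∀ j, lam j < lam i → Tendsto (fun n => c n j) atTop (𝓝 0) := by
      intro j hj
      refine ih j ?_
      have hsub : Finset.univ.filter (fun l => lam l < lam j) ⊆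
          Finset.univ.filter (fun l => lam l < lam i) := by
        intro l hl
        simp only [Finset.mem_filter, Finset.mem_univ, true_and] at hl ⊢
        linarith
      have hjmem : j ∈ Finset.univ.filter (fun l => lam l < lam i) := by
        simp only [Finset.mem_filter, Finset.mem_univ, true_and]; exact hj
      have hjnot : j ∉ Finset.univ.filter (fun l => lam l < lam j) := by
        simp only [Finset.mem_filter, Finset.mem_univ, true_and, not_lt]
        exact le_rfl
      have hlt : (Finset.univ.filter (fun l => lam l < lam j)).card <
          (Finset.univ.filter (fun l => lam l < lam i)).card :=
        Finset.card_lt_card ⟨hsub, fun h => hjnot (h hjmem)⟩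
      omega
    set J := Finset.univ.filter (fun j => lam j < 2 / 3 * lam i) with hJ
    set S : ℕ → ℝ := fun n => ∑ j ∈ J, (c n j) ^ 2 with hSdef
    have hS : Tendsto S atTop (𝓝 0) := by
      rw [hSdef]
      have h0 : (0 : ℝ) = ∑ j ∈ J, (0 : ℝ) := by simp
      rw [h0]
      refine tendsto_finset_sum _ fun j hj => ?_
      have hji : lam j < lam i := by
        rw [hJ] at hj
        simp only [Finset.mem_filter, Finset.mem_univ, true_and] at hj
        nlinarith [hlam0 i]
      have := (IH j hji).mul (IH j hji)
      simpa [pow_two] using this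
    set bb : ℕ → ℝ := fun n => ∑ t ∈ Finset.range d2, S (n - t) with hbbdef
    have hbb : Tendsto bb atTop (𝓝 0) := by
      rw [hbbdef]
      have h0 : (0 : ℝ) = ∑ t ∈ Finset.range d2, (0 : ℝ) := by simp
      rw [h0]
      exact tendsto_finset_sum _ fun t _ => hS.comp (tendsto_sub_atTop_nat t)
    have hSnn : ∀ n, 0 ≤ S n := fun n => Finset.sum_nonneg fun j _ => sq_nonneg _
    have hSbb : ∀ m n, m ≤ n → n < m + d2 → S m ≤ bb n := by
      intro m n h1 h2
      have ht : n - (n - m) = m := by omega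
      have htm : n - m ∈ Finset.range d2 := Finset.mem_range.2 (by omega)
      calc S m = S (n - (n - m)) := by rw [ht]
        _ ≤ bb n := Finset.single_le_sum (f := fun t => S (n - t))
            (fun t _ => hSnn _) htm
    set M : ℝ := 1 + lam i / lmin with hM
    have hM1 : 1 ≤ M := by
      have h0 : 0 ≤ lam i / lmin := div_nonneg (hlam0 i).le hlmin.le
      rw [hM]; linarith
    have hmul : ∀ n, |1 - alpha n * lam i| ≤ M := by
      intro n
      have h1 : alpha n * lam i ≤ (1 / lmin) * lam i :=
        mul_le_mul_of_nonneg_right (hahi n) (hlam0 i).le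
      have h2 : 0 ≤ alpha n * lam i := mul_nonneg (hanonneg n) (hlam0 i).le
      rw [abs_le, hM]
      constructor
      · have : (1 / lmin) * lam i = lam i / lmin := by ring
        rw [this] at h1
        linarith
      · have : 0 ≤ lam i / lmin := div_nonneg (hlam0 i).le hlmin.le
        linarith
    have hgrow : ∀ n, (c (n + 1) i) ^ 2 ≤ M ^ 2 * (c n i) ^ 2 := by
      intro n
      rw [hrec n i]
      have h := hmul n
      have h2 : (1 - alpha n * lam i) ^ 2 ≤ M ^ 2 := sq_le_sq' (by cases abs_le.1 h; linarith) (abs_le.1 h).2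
      calc ((1 - alpha n * lam i) * c n i) ^ 2 = (1 - alpha n * lam i) ^ 2 * (c n i) ^ 2 := by ring
        _ ≤ M ^ 2 * (c n i) ^ 2 := mul_le_mul_of_nonneg_right h2 (sq_nonneg _)
    have hgrowit : ∀ m t, (c (m + t) i) ^ 2 ≤ M ^ (2 * t) * (c m i) ^ 2 := by
      intro m t
      induction t with
      | zero => simp
      | succ t iht =>
        have h1 : (c (m + t + 1) i) ^ 2 ≤ M ^ 2 * (c (m + t) i) ^ 2 := hgrow (m + t)
        have h2 : M ^ 2 * (c (m + t) i) ^ 2 ≤ M ^ 2 * (M ^ (2 * t) * (c m i) ^ 2) :=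
          mul_le_mul_of_nonneg_left iht (by positivity)
        calc (c (m + (t + 1)) i) ^ 2 = (c (m + t + 1) i) ^ 2 := by ring_nf
          _ ≤ M ^ 2 * (M ^ (2 * t) * (c m i) ^ 2) := h1.trans h2
          _ = M ^ (2 * (t + 1)) * (c m i) ^ 2 := by
              rw [show 2 * (t + 1) = 2 * t + 2 by ring, pow_add]; ring
    have hM0 : (0:ℝ) ≤ M := le_trans zero_le_one hM1
    set rho : ℝ := max (1/2) (1 - θ * lam i / lmax) with hrho
    have hrho0 : 0 ≤ rho := le_trans (by norm_num) (le_max_left _ _)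
    have hrho1 : rho < 1 := by
      rw [hrho]
      apply max_lt (by norm_num)
      have h0 : 0 < θ * lam i / lmax := div_pos (mul_pos hθ0 (hlam0 i)) hlmax0
      linarith
    have hdich : ∀ n, (c (n + 1) i) ^ 2 ≤
        max (rho ^ 2 * (c n i) ^ 2) (M ^ (2 * d2) * bb n) := by
      intro n
      by_cases hcase : alpha n ≤ 3 / (2 * lam i)
      · refine le_max_of_le_left ?_
        rw [hrec n i]
        have hup : 1 - alpha n * lam i ≤ rho := by
          have h1 : θ / lmax * lam i ≤ alpha n * lam i :=
            mul_le_mul_of_nonneg_right (halo n) (hlam0 i).le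
          have h2 : θ / lmax * lam i = θ * lam i / lmax := by ring
          have h3 : 1 - alpha n * lam i ≤ 1 - θ * lam i / lmax := by
            rw [← h2]; linarith
          exact h3.trans (le_max_right _ _)
        have hlow : -rho ≤ 1 - alpha n * lam i := by
          have h1 : alpha n * lam i ≤ 3 / (2 * lam i) * lam i :=
            mul_le_mul_of_nonneg_right hcase (hlam0 i).le
          have hne0 := (hlam0 i).ne'
          have h2 : 3 / (2 * lam i) * lam i = 3 / 2 := by field_simp
          have h3 : -(1/2 : ℝ) ≤ 1 - alpha n * lam i := by rw [h2] at h1; linarith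
          have h4 : (1/2 : ℝ) ≤ rho := le_max_left _ _
          linarith
        have hsq := sq_le_sq' hlow hup
        calc ((1 - alpha n * lam i) * c n i) ^ 2
            = (1 - alpha n * lam i) ^ 2 * (c n i) ^ 2 := by ring
          _ ≤ rho ^ 2 * (c n i) ^ 2 := mul_le_mul_of_nonneg_right hsq (sq_nonneg _)
      · push_neg at hcase
        refine le_max_of_le_right ?_
        obtain ⟨m, hm1, hm2, hc⟩ := halpha n
        have hbm : ∃ m', m' ≤ n ∧ n < m' + d2 ∧ 3 / (2 * lam i) < beta m' := by
          rcases hc with h | h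
          · exact ⟨n, le_rfl, by omega, by rw [← h]; exact hcase⟩
          · refine ⟨m, hm1, hm2, ?_⟩
            have hb0 := hbpos m
            have hth : θ * beta m < beta m := by nlinarith
            rw [h] at hcase; linarith
        obtain ⟨m', hm'1, hm'2, hbm'⟩ := hbm
        have hcm : (c m' i) ^ 2 ≤ S m' := hbad i m' hbm'
        have hcn : (c n i) ^ 2 ≤ M ^ (2 * (n - m')) * (c m' i) ^ 2 := by
          have h := hgrowit m' (n - m')
          rwa [show m' + (n - m') = n by omega] at h
        have hpowle : M ^ (2 * (n - m')) ≤ M ^ (2 * (d2 - 1)) :=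
          pow_le_pow_right₀ hM1 (by omega)
        have hSb : S m' ≤ bb n := hSbb m' n hm'1 hm'2
        calc (c (n + 1) i) ^ 2 ≤ M ^ 2 * (c n i) ^ 2 := hgrow n
          _ ≤ M ^ 2 * (M ^ (2 * (d2 - 1)) * S m') := by
              refine mul_le_mul_of_nonneg_left ?_ (pow_nonneg hM0 _)
              calc (c n i) ^ 2 ≤ M ^ (2 * (n - m')) * (c m' i) ^ 2 := hcn
                _ ≤ M ^ (2 * (d2 - 1)) * S m' :=
                    mul_le_mul hpowle hcm (sq_nonneg _) (pow_nonneg hM0 _)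
          _ = M ^ (2 * d2) * S m' := by
              rw [show 2 * d2 = 2 + 2 * (d2 - 1) by omega, pow_add]; ring
          _ ≤ M ^ (2 * d2) * bb n :=
              mul_le_mul_of_nonneg_left hSb (pow_nonneg hM0 _)
    have hfin : Tendsto (fun n => (c n i) ^ 2) atTop (𝓝 0) := by
      refine aoa_max_rec (sq_nonneg rho) ?_ (fun n => sq_nonneg _) ?_ hdich
      · exact pow_lt_one₀ hrho0 hrho1 two_ne_zero
      · simpa using hbb.const_mul (M ^ (2 * d2))
    have habs : Tendsto (fun n => |c n i|) atTop (𝓝 0) := by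
      have h := hfin.sqrt
      simpa [Real.sqrt_sq_eq_abs] using h
    exact (tendsto_zero_iff_abs_tendsto_zero _).2 habs

/-- Convergence of the asymptotically optimal method with alignment (AOA):
the gradient iteration using the AO steplength `‖g_n‖/‖A g_n‖` for the first `d₁`
steps of each cycle of length `d₁ + d₂`, the shortened step `θ ‖g_n‖/‖A g_n‖` once,
and then keeping the steplength constant for the rest of the cycle, converges to
`x_* = A⁻¹ b` from any starting point.  (If some `g_n = 0`, the iterate is already
`x_*` and stays there, since the update `−α_n g_n` then vanishes.) -/
theorem aoa_converges
    (N : ℕ)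
    (A : Matrix (Fin N) (Fin N) ℝ) (b : Fin N → ℝ)
    (hA : A.PosDef)
    (d1 d2 : ℕ) (hd1 : 1 ≤ d1) (hd2 : 1 ≤ d2)
    (θ : ℝ) (hθ : θ ∈ Set.Ioo (0 : ℝ) 1)
    (x g : ℕ → Fin N → ℝ) (alpha : ℕ → ℝ)
    (hg : ∀ n, g n = A.mulVec (x n) - b)
    (halpha : ∀ n, alpha n =
      if n % (d1 + d2) < d1 then
        Real.sqrt (g n ⬝ᵥ g n) / Real.sqrt (A.mulVec (g n) ⬝ᵥ A.mulVec (g n))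
      else if n % (d1 + d2) = d1 then
        θ * (Real.sqrt (g n ⬝ᵥ g n) / Real.sqrt (A.mulVec (g n) ⬝ᵥ A.mulVec (g n)))
      else alpha (n - 1))
    (hx : ∀ n, x (n + 1) = x n - alpha n • g n)
    (xstar : Fin N → ℝ) (hxstar : A.mulVec xstar = b) :
    Tendsto x atTop (𝓝 xstar) := by
  obtain ⟨hθ0, hθ1⟩ := hθ
  have hherm : A.IsHermitian := hA.1
  -- inverse cancellation
  have hdet : IsUnit A.det := isUnit_iff_ne_zero.2 (ne_of_gt hA.det_pos)
  have hcancel : ∀ u : Fin N → ℝ, A⁻¹ *ᵥ (A *ᵥ u) = u := by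
    intro u
    rw [Matrix.mulVec_mulVec, Matrix.nonsing_inv_mul A hdet, Matrix.one_mulVec]
  -- gradient recursion
  have hgrec : ∀ n, g (n + 1) = g n - alpha n • (A *ᵥ g n) := by
    intro n
    rw [hg (n + 1), hx n, Matrix.mulVec_sub, Matrix.mulVec_smul, hg n]
    abel
  -- zero gradient is absorbing
  have habsorb : ∀ n m, n ≤ m → g n = 0 → g m = 0 ∧ x m = x n := by
    intro n m hnm h0
    induction m, hnm using Nat.le_induction with
    | base => exact ⟨h0, rfl⟩
    | succ m hm ihm =>
      obtain ⟨h1, h2⟩ := ihm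
      constructor
      · rw [hgrec m, h1]; simp
      · rw [hx m, h1]; simpa using h2
  by_cases hz : ∃ n, g n = 0
  · obtain ⟨n0, h0⟩ := hz
    have hx0 : x n0 = xstar := by
      have h1 : A *ᵥ x n0 = A *ᵥ xstar := by
        have h2 := hg n0
        rw [h0] at h2
        have h3 : A *ᵥ x n0 - b = 0 := h2.symm
        rw [hxstar]
        have := sub_eq_zero.1 h3
        exact this
      have := congrArg (fun u => A⁻¹ *ᵥ u) h1
      simpa [hcancel] using this
    have hev : ∀ᶠ m in atTop, x m = xstar :=
      eventually_atTop.2 ⟨n0, fun m hm => ((habsorb n0 m hm h0).2).trans hx0⟩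
    exact Tendsto.congr' (by filter_upwards [hev] with m hm using hm.symm) tendsto_const_nhds
  · push_neg at hz
    -- dimension is positive
    have hN : N ≠ 0 := by
      rintro rfl
      exact hz 0 (funext fun i => i.elim0)
    haveI : Nonempty (Fin N) := ⟨⟨0, Nat.pos_of_ne_zero hN⟩⟩
    -- eigen data
    set lam : Fin N → ℝ := hherm.eigenvalues with hlamdef
    have hlampos : ∀ i, 0 < lam i := hA.eigenvalues_pos
    set vB := hherm.eigenvectorBasis with hvB
    set v : Fin N → (Fin N → ℝ) := fun i => (WithLp.equiv 2 _) (vB i) with hv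
    have hAv : ∀ i, A *ᵥ v i = lam i • v i := fun i => hherm.mulVec_eigenvectorBasis i
    -- symmetry of A w.r.t. the dot product
    have hsymm : ∀ u w : Fin N → ℝ, (A *ᵥ u) ⬝ᵥ w = u ⬝ᵥ (A *ᵥ w) := by
      intro u w
      rw [Matrix.dotProduct_mulVec u A w, ← Matrix.mulVec_transpose]
      have hT : Aᵀ = A := by simpa using hherm.eq
      rw [hT, dotProduct_comm]
    -- inner product equals dot product
    have hdot : ∀ u w : EuclideanSpace ℝ (Fin N),
        (inner ℝ u w : ℝ) = (WithLp.equiv 2 _ u) ⬝ᵥ ((WithLp.equiv 2 _) w : Fin N → ℝ) := by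
      intro u w; simp [PiLp.inner_apply, dotProduct, mul_comm]
    -- coordinates
    set c : ℕ → Fin N → ℝ := fun n i => v i ⬝ᵥ g n with hc
    have hvAg : ∀ n i, v i ⬝ᵥ (A *ᵥ g n) = lam i * c n i := by
      intro n i
      rw [← hsymm (v i) (g n), hAv i, smul_dotProduct]
      rfl
    have hcrec : ∀ n i, c (n + 1) i = (1 - alpha n * lam i) * c n i := by
      intro n i
      show v i ⬝ᵥ g (n + 1) = _
      rw [hgrec n, dotProduct_sub, dotProduct_smul, hvAg n i]
      show c n i - alpha n * (lam i * c n i) = _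
      ring
    -- Parseval identities
    have hinnerc : ∀ n i, (inner ℝ ((WithLp.equiv 2 _).symm (g n) : EuclideanSpace ℝ (Fin N)) (vB i) : ℝ) = c n i := by
      intro n i
      rw [real_inner_comm, hdot]
      rw [Equiv.apply_symm_apply]
    have hPid : ∀ n, g n ⬝ᵥ g n = ∑ i, (c n i) ^ 2 := by
      intro n
      set G : EuclideanSpace ℝ (Fin N) := (WithLp.equiv 2 _).symm (g n) with hG
      have h1 := vB.sum_inner_mul_inner G G
      have h2 : (inner ℝ G G : ℝ) = g n ⬝ᵥ g n := by
        rw [hdot, Equiv.apply_symm_apply]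
      rw [← h2, ← h1]
      refine Finset.sum_congr rfl fun i _ => ?_
      have h3 : (inner ℝ G (vB i) : ℝ) = c n i := hinnerc n i
      have h4 : (inner ℝ (vB i) G : ℝ) = c n i := by
        rw [real_inner_comm]; exact h3
      rw [h3, h4, pow_two]
    have hQid : ∀ n, (A *ᵥ g n) ⬝ᵥ (A *ᵥ g n) = ∑ i, (lam i) ^ 2 * (c n i) ^ 2 := by
      intro n
      set G : EuclideanSpace ℝ (Fin N) := (WithLp.equiv 2 _).symm (A *ᵥ g n) with hG
      have h1 := vB.sum_inner_mul_inner G G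
      have h2 : (inner ℝ G G : ℝ) = (A *ᵥ g n) ⬝ᵥ (A *ᵥ g n) := by
        rw [hdot, Equiv.apply_symm_apply]
      have h3 : ∀ i, (inner ℝ (vB i) G : ℝ) = lam i * c n i := by
        intro i
        rw [hdot, Equiv.apply_symm_apply]
        exact hvAg n i
      rw [← h2, ← h1]
      refine Finset.sum_congr rfl fun i _ => ?_
      have h4 : (inner ℝ G (vB i) : ℝ) = lam i * c n i := by
        rw [real_inner_comm]; exact h3 i
      rw [h4, h3 i]; ring
    -- the steplength in terms of coordinates
    set beta : ℕ → ℝ := fun n =>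
      Real.sqrt (∑ i, (c n i) ^ 2) / Real.sqrt (∑ i, (lam i) ^ 2 * (c n i) ^ 2) with hbetadef
    have hbeta_eq : ∀ n, Real.sqrt (g n ⬝ᵥ g n) /
        Real.sqrt ((A *ᵥ g n) ⬝ᵥ (A *ᵥ g n)) = beta n := by
      intro n; rw [hPid n, hQid n]
    -- structure of alpha by strong induction on n
    set L := d1 + d2 with hLdef
    have hL0 : 0 < L := by omega
    have hstruct : ∀ n, (n % L < d1 ∧ alpha n = beta n) ∨
        (∃ m, alpha n = θ * beta m ∧ m + n % L = n + d1 ∧ d1 ≤ n % L) := by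
      intro n
      induction n using Nat.strong_induction_on with
      | _ n ihn =>
        by_cases h1 : n % L < d1
        · left
          refine ⟨h1, ?_⟩
          rw [halpha n, if_pos h1, hbeta_eq n]
        · by_cases h2 : n % L = d1
          · right
            exact ⟨n, by rw [halpha n, if_neg h1, if_pos h2, hbeta_eq n], by omega, by omega⟩
          · right
            have hd1n : d1 < n % L := by omega
            have hmodlt : n % L < L := Nat.mod_lt n hL0
            have hmodle : n % L ≤ n := Nat.mod_le n L
            have hn1 : 1 ≤ n := by omega
            -- (n-1) % L = n % L - 1
            have hqr := Nat.div_add_mod n L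
            have hmod1 : (n - 1) % L = n % L - 1 := by
              have hrep : n - 1 = (n % L - 1) + L * (n / L) := by omega
              rw [hrep, Nat.add_mul_mod_self_left, Nat.mod_eq_of_lt (by omega)]
            have hprev := ihn (n - 1) (by omega)
            rcases hprev with ⟨hlt, _⟩ | ⟨m, hm1, hm2, hm3⟩
            · rw [hmod1] at hlt; omega
            · refine ⟨m, ?_, by omega, by omega⟩
              rw [halpha n, if_neg h1, if_neg h2]
              exact hm1
    have halpha' : ∀ n, ∃ m, m ≤ n ∧ n < m + d2 ∧
        (alpha n = beta n ∨ alpha n = θ * beta m) := by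
      intro n
      rcases hstruct n with ⟨_, heq⟩ | ⟨m, heq, hm2, hm3⟩
      · exact ⟨n, le_rfl, by omega, Or.inl heq⟩
      · have hmodlt : n % L < L := Nat.mod_lt n hL0
        exact ⟨m, by omega, by omega, Or.inr heq⟩
    -- coordinates are not all zero
    have hne : ∀ n, ∃ i, c n i ≠ 0 := by
      intro n
      by_contra h
      push_neg at h
      apply hz n
      have h0 : g n ⬝ᵥ g n = 0 := by
        rw [hPid n]
        refine Finset.sum_eq_zero fun i _ => by rw [h i]; ring
      exact (dotProduct_self_eq_zero).1 h0
    -- extreme eigenvalues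
    obtain ⟨imax, hmax⟩ := Finite.exists_max lam
    obtain ⟨imin, hmin⟩ := Finite.exists_min lam
    have hmem : ∀ i, lam i ∈ Set.Icc (lam imin) (lam imax) := fun i => ⟨hmin i, hmax i⟩
    -- the core convergence result
    have hcoord := aoa_coord lam (lam imin) (lam imax) (hlampos imin) hmem
      θ hθ0 hθ1 d2 hd2 c alpha beta hcrec (fun n => rfl) hne halpha'
    -- each coordinate of g tends to zero
    have hgj : ∀ j, Tendsto (fun n => g n j) atTop (𝓝 0) := by
      intro j
      have hexp : ∀ n, g n j = ∑ i, c n i * v i j := by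
        intro n
        have h1 := vB.sum_inner_mul_inner
          ((WithLp.equiv 2 _).symm (g n) : EuclideanSpace ℝ (Fin N))
          ((WithLp.equiv 2 _).symm (Pi.single j 1) : EuclideanSpace ℝ (Fin N))
        have h2 : (inner ℝ ((WithLp.equiv 2 _).symm (g n) : EuclideanSpace ℝ (Fin N))
            ((WithLp.equiv 2 _).symm (Pi.single j 1) : EuclideanSpace ℝ (Fin N)) : ℝ) = g n j := by
          rw [hdot, Equiv.apply_symm_apply, Equiv.apply_symm_apply,
            dotProduct_single]
          ring
        have h3 : ∀ i, (inner ℝ (vB i)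
            ((WithLp.equiv 2 _).symm (Pi.single j 1) : EuclideanSpace ℝ (Fin N)) : ℝ) = v i j := by
          intro i
          rw [hdot, Equiv.apply_symm_apply, dotProduct_single]
          show v i j * 1 = v i j
          ring
        rw [← h2, ← h1]
        refine Finset.sum_congr rfl fun i _ => ?_
        rw [h3 i, hinnerc n i]
      have : Tendsto (fun n => ∑ i, c n i * v i j) atTop (𝓝 0) := by
        have h0 : (0 : ℝ) = ∑ i : Fin N, (0 : ℝ) * v i j := by simp
        rw [h0]
        exact tendsto_finset_sum _ fun i _ => (hcoord i).mul_const (v i j)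
      exact this.congr fun n => (hexp n).symm
    -- reconstruct x from g
    have hxrep : ∀ n, x n = fun j => xstar j + (A⁻¹ *ᵥ g n) j := by
      intro n
      have h1 : A *ᵥ (x n - xstar) = g n := by
        rw [Matrix.mulVec_sub, hxstar, hg n]
      have h2 : x n - xstar = A⁻¹ *ᵥ g n := by
        rw [← h1, hcancel]
      funext j
      have := congrFun h2 j
      simp only [Pi.sub_apply] at this
      linarith
    rw [tendsto_pi_nhds]
    intro j
    have h1 : Tendsto (fun n => (A⁻¹ *ᵥ g n) j) atTop (𝓝 0) := by
      have hrep : ∀ n, (A⁻¹ *ᵥ g n) j = ∑ m, A⁻¹ j m * g n m := by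
        intro n; rfl
      have : Tendsto (fun n => ∑ m, A⁻¹ j m * g n m) atTop (𝓝 0) := by
        have h0 : (0 : ℝ) = ∑ m : Fin N, A⁻¹ j m * 0 := by simp
        rw [h0]
        exact tendsto_finset_sum _ fun m _ => (hgj m).const_mul (A⁻¹ j m)
      exact this.congr fun n => (hrep n).symm
    have h2 : Tendsto (fun n => xstar j + (A⁻¹ *ᵥ g n) j) atTop (𝓝 (xstar j)) := by
      have := h1.const_add (xstar j)
      simpa using this
    refine h2.congr fun n => ?_
    rw [hxrep n]
end

section
/- Consider the linear system Ax = b where A ∈ ℝ^{N×N} is symmetric positive definite, and let x_* = A⁻¹ b. Fix integers d_1, d_2 ≥ 1. Let the iterates be generated by x_{n+1} = x_n − α_n g_n with g_n = A x_n − b and the MGA steplength: α_n = α_n^MG = (g_nᵀ A g_n)/(g_nᵀ A² g_n) if n mod (d_1+d_2) < d_1; α_n = α_n^A2 = (1/α_{n−1}^MG + 1/α_n^MG)^{−1} if n mod (d_1+d_2) = d_1; and α_n = α_{n−1} otherwise (the iteration terminates if some g_n = 0, in which case x_n = x_*). Then the sequence {x_n} converges to x_* for any starting point x_0. -/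
open Filter Topology Matrix

set_option maxHeartbeats 2000000 in
/-- Convergence of the minimal gradient method with alignment (MGA):
the gradient iteration using the MG steplength `(g_nᵀ A g_n)/(g_nᵀ A² g_n)` for the
first `d₁` steps of each cycle of length `d₁ + d₂`, the auxiliary steplength
`α_n^A2 = (1/α_{n−1}^MG + 1/α_n^MG)⁻¹` once, and then keeping the steplength constant
for the rest of the cycle, converges to `x_* = A⁻¹ b` from any starting point.
(If some `g_n = 0`, the iterate is already `x_*` and stays there, since the update
`−α_n g_n` then vanishes.) -/
theorem mga_converges
    (N : ℕ)
    (A : Matrix (Fin N) (Fin N) ℝ) (b : Fin N → ℝ)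
    (hA : A.PosDef)
    (d1 d2 : ℕ) (hd1 : 1 ≤ d1) (hd2 : 1 ≤ d2)
    (x g : ℕ → Fin N → ℝ) (alphaMG alpha : ℕ → ℝ)
    (hg : ∀ n, g n = A.mulVec (x n) - b)
    (hMG : ∀ n, alphaMG n =
      (g n ⬝ᵥ A.mulVec (g n)) / (g n ⬝ᵥ A.mulVec (A.mulVec (g n))))
    (halpha : ∀ n, alpha n =
      if n % (d1 + d2) < d1 then alphaMG n
      else if n % (d1 + d2) = d1 then (1 / alphaMG (n - 1) + 1 / alphaMG n)⁻¹
      else alpha (n - 1))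
    (hx : ∀ n, x (n + 1) = x n - alpha n • g n)
    (xstar : Fin N → ℝ) (hxstar : A.mulVec xstar = b) :
    Tendsto x atTop (𝓝 xstar) := by
  classical
  have hdet : IsUnit A.det := isUnit_iff_ne_zero.mpr (ne_of_gt hA.det_pos)
  have hsolve : ∀ v : Fin N → ℝ, A⁻¹ *ᵥ (A *ᵥ v) = v := by
    intro v
    rw [Matrix.mulVec_mulVec, Matrix.nonsing_inv_mul A hdet, Matrix.one_mulVec]
  have hxg2 : ∀ n, x n = xstar + A⁻¹ *ᵥ g n := by
    intro n
    have h1 : A *ᵥ x n = g n + b := by rw [hg n]; abel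
    have h2 : x n = A⁻¹ *ᵥ (g n + b) := by rw [← h1, hsolve]
    have h3 : xstar = A⁻¹ *ᵥ b := by rw [← hxstar, hsolve]
    rw [h2, Matrix.mulVec_add, ← h3]; abel
  -- it suffices to show g → 0
  suffices hG : Tendsto g atTop (𝓝 0) by
    have hcont : Continuous fun w : Fin N → ℝ => A⁻¹ *ᵥ w :=
      LinearMap.continuous_of_finiteDimensional (Matrix.mulVecLin A⁻¹)
    have h1 : Tendsto (fun n => A⁻¹ *ᵥ g n) atTop (𝓝 (A⁻¹ *ᵥ 0)) :=
      (hcont.tendsto 0).comp hG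
    rw [Matrix.mulVec_zero] at h1
    have h2 : Tendsto (fun n => xstar + A⁻¹ *ᵥ g n) atTop (𝓝 (xstar + 0)) :=
      tendsto_const_nhds.add h1
    rw [add_zero] at h2
    exact h2.congr (fun n => (hxg2 n).symm)
  by_cases hgz : ∀ n, g n ≠ 0
  case neg =>
    -- some gradient vanishes: the iteration is eventually constant at xstar
    push_neg at hgz
    obtain ⟨n0, hn0⟩ := hgz
    have hx0 : x n0 = xstar := by
      have h1 : A *ᵥ x n0 = A *ᵥ xstar := by
        rw [hxstar]
        have := hg n0
        rw [hn0] at this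
        have h2 : A *ᵥ x n0 - b = 0 := this.symm
        linear_combination (norm := module) h2
      calc x n0 = A⁻¹ *ᵥ (A *ᵥ x n0) := (hsolve _).symm
        _ = A⁻¹ *ᵥ (A *ᵥ xstar) := by rw [h1]
        _ = xstar := hsolve _
    have hconst : ∀ k, x (n0 + k) = xstar := by
      intro k
      induction k with
      | zero => exact hx0
      | succ k ih =>
        have hgk : g (n0 + k) = 0 := by
          rw [hg, ih, hxstar]; simp
        have := hx (n0 + k)
        rw [hgk] at this
        simpa [← Nat.add_assoc, this] using ih
    have hge : ∀ k, g (n0 + k) = 0 := by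
      intro k; rw [hg, hconst, hxstar]; simp
    apply Tendsto.congr' _ tendsto_const_nhds
    filter_upwards [eventually_ge_atTop n0] with n hn
    obtain ⟨k, rfl⟩ := Nat.exists_eq_add_of_le hn
    exact (hge k).symm
  case pos =>
  -- main case: all gradients nonzero
  haveI hne : Nonempty (Fin N) := by
    by_contra hemp
    haveI : IsEmpty (Fin N) := not_nonempty_iff.mp hemp
    exact hgz 0 (Subsingleton.elim _ _)
  have hgrec : ∀ n, g (n+1) = g n - alpha n • (A *ᵥ g n) := by
    intro n
    rw [hg (n+1), hx n, Matrix.mulVec_sub, Matrix.mulVec_smul, hg n]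
    abel
  -- spectral setup
  have hH : A.IsHermitian := hA.1
  set V := hH.eigenvectorBasis with hV
  set lam := hH.eigenvalues with hlamdef
  have hlam : ∀ i, 0 < lam i := fun i => hA.eigenvalues_pos i
  set μ := Finset.univ.inf' Finset.univ_nonempty lam with hμdef
  set L := Finset.univ.sup' Finset.univ_nonempty lam with hLdef
  have hμle : ∀ i, μ ≤ lam i := fun i => Finset.inf'_le _ (Finset.mem_univ i)
  have hleL : ∀ i, lam i ≤ L := fun i => Finset.le_sup' _ (Finset.mem_univ i)
  have hμpos : 0 < μ := by
    obtain ⟨i, _, hi⟩ := Finset.exists_mem_eq_inf' Finset.univ_nonempty lam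
    rw [hμdef, hi]; exact hlam i
  have hLpos : 0 < L := lt_of_lt_of_le hμpos (le_trans (hμle (Classical.arbitrary _)) (hleL _))
  have hμL : μ ≤ L := le_trans (hμle (Classical.arbitrary _)) (hleL _)
  have hInnerDot : ∀ u v : Fin N → ℝ,
      (inner (𝕜 := ℝ) (WithLp.toLp 2 u : EuclideanSpace ℝ (Fin N)) (WithLp.toLp 2 v)) = u ⬝ᵥ v := by
    intro u v
    simp [PiLp.inner_apply, dotProduct, mul_comm]
  have hAT : Aᵀ = A := by
    have := hH
    rwa [Matrix.IsHermitian, Matrix.conjTranspose_eq_transpose_of_trivial] at this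
  have hVA : ∀ (i : Fin N) (u : Fin N → ℝ),
      (inner (𝕜 := ℝ) (V i) (WithLp.toLp 2 (A *ᵥ u : Fin N → ℝ) : EuclideanSpace ℝ (Fin N))) =
        lam i * inner (𝕜 := ℝ) (V i) (WithLp.toLp 2 u : EuclideanSpace ℝ (Fin N)) := by
    intro i u
    have h1 : (inner (𝕜 := ℝ) (V i) (WithLp.toLp 2 (A *ᵥ u : Fin N → ℝ) : EuclideanSpace ℝ (Fin N))) =
        (V i : Fin N → ℝ) ⬝ᵥ (A *ᵥ u) := hInnerDot (V i : Fin N → ℝ) _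
    have h2 : (V i : Fin N → ℝ) ⬝ᵥ (A *ᵥ u) = (A *ᵥ (V i : Fin N → ℝ)) ⬝ᵥ u := by
      rw [Matrix.dotProduct_mulVec, ← Matrix.mulVec_transpose, hAT]
    have h3 : A *ᵥ (V i : Fin N → ℝ) = lam i • (V i : Fin N → ℝ) :=
      hH.mulVec_eigenvectorBasis i
    rw [h1, h2, h3, smul_dotProduct, ← hInnerDot]
    rfl
  -- coefficients in the eigenbasis
  set c : Fin N → ℕ → ℝ :=
    fun i n => inner (𝕜 := ℝ) (V i) (WithLp.toLp 2 (g n : Fin N → ℝ) : EuclideanSpace ℝ (Fin N)) with hcdef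
  have hcEq : ∀ i n, c i n
      = inner (𝕜 := ℝ) (V i) (WithLp.toLp 2 (g n : Fin N → ℝ) : EuclideanSpace ℝ (Fin N)) := fun _ _ => rfl
  have hP : ∀ n, g n ⬝ᵥ (A *ᵥ g n) = ∑ i, lam i * (c i n)^2 := by
    intro n
    have h0 : g n ⬝ᵥ (A *ᵥ g n)
        = inner (𝕜 := ℝ) (WithLp.toLp 2 (g n) : EuclideanSpace ℝ (Fin N)) (WithLp.toLp 2 (A *ᵥ g n)) := (hInnerDot _ _).symm
    rw [h0, ← V.sum_inner_mul_inner]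
    congr 1; funext i
    rw [real_inner_comm]; rw [hVA, hcEq]
    ring
  have hQ : ∀ n, g n ⬝ᵥ (A *ᵥ (A *ᵥ g n)) = ∑ i, (lam i)^2 * (c i n)^2 := by
    intro n
    have h0 : g n ⬝ᵥ (A *ᵥ (A *ᵥ g n))
        = inner (𝕜 := ℝ) (WithLp.toLp 2 (g n) : EuclideanSpace ℝ (Fin N)) (WithLp.toLp 2 (A *ᵥ (A *ᵥ g n))) :=
      (hInnerDot _ _).symm
    rw [h0, ← V.sum_inner_mul_inner]
    congr 1; funext i
    rw [real_inner_comm]; rw [hVA, hVA, hcEq]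
    ring
  have hg2 : ∀ n, g n ⬝ᵥ g n = ∑ i, (c i n)^2 := by
    intro n
    have h0 : g n ⬝ᵥ g n
        = inner (𝕜 := ℝ) (WithLp.toLp 2 (g n) : EuclideanSpace ℝ (Fin N)) (WithLp.toLp 2 (g n)) := (hInnerDot _ _).symm
    rw [h0, ← V.sum_inner_mul_inner]
    congr 1; funext i
    rw [real_inner_comm]; rw [hcEq, sq]
  have hrec : ∀ i n, c i (n+1) = (1 - alpha n * lam i) * c i n := by
    intro i n
    rw [hcEq]
    have h1 : (WithLp.toLp 2 (g (n+1) : Fin N → ℝ) : EuclideanSpace ℝ (Fin N))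
        = (WithLp.toLp 2 (g n : Fin N → ℝ) : EuclideanSpace ℝ (Fin N))
          - alpha n • (WithLp.toLp 2 (A *ᵥ g n : Fin N → ℝ) : EuclideanSpace ℝ (Fin N)) := by
      rw [hgrec n, WithLp.toLp_sub, WithLp.toLp_smul]
    rw [h1, inner_sub_right, real_inner_smul_right, hVA, hcEq]
    ring
  -- positivity of the quadratic forms
  have hgdot : ∀ n, 0 < g n ⬝ᵥ g n := by
    intro n
    have h1 : 0 ≤ g n ⬝ᵥ g n := Finset.sum_nonneg fun j _ => mul_self_nonneg _
    rcases h1.lt_or_eq with h | h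
    · exact h
    · exfalso
      apply hgz n
      funext j
      have := dotProduct_self_eq_zero.mp h.symm
      exact congrFun this j
  have hPpos : ∀ n, 0 < g n ⬝ᵥ (A *ᵥ g n) := by
    intro n
    rw [hP]
    calc (0:ℝ) < μ * (g n ⬝ᵥ g n) := mul_pos hμpos (hgdot n)
      _ = ∑ i, μ * (c i n)^2 := by rw [hg2, Finset.mul_sum]
      _ ≤ ∑ i, lam i * (c i n)^2 :=
        Finset.sum_le_sum fun i _ => mul_le_mul_of_nonneg_right (hμle i) (sq_nonneg _)
  have hQgeμP : ∀ n, μ * (g n ⬝ᵥ (A *ᵥ g n)) ≤ g n ⬝ᵥ (A *ᵥ (A *ᵥ g n)) := by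
    intro n
    rw [hP, hQ, Finset.mul_sum]
    refine Finset.sum_le_sum fun i _ => ?_
    have : μ * lam i ≤ lam i ^ 2 := by
      have := hμle i; nlinarith [sq_nonneg (c i n), hlam i]
    nlinarith [sq_nonneg (c i n)]
  have hQleLP : ∀ n, g n ⬝ᵥ (A *ᵥ (A *ᵥ g n)) ≤ L * (g n ⬝ᵥ (A *ᵥ g n)) := by
    intro n
    rw [hP, hQ, Finset.mul_sum]
    refine Finset.sum_le_sum fun i _ => ?_
    have h1 := hleL i; have h2 := hlam i
    have h3 : lam i ^ 2 ≤ L * lam i := by nlinarith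
    calc lam i ^2 * c i n ^2 ≤ (L * lam i) * c i n ^2 :=
          mul_le_mul_of_nonneg_right h3 (sq_nonneg _)
      _ = L * (lam i * c i n ^2) := by ring
  have hQpos : ∀ n, 0 < g n ⬝ᵥ (A *ᵥ (A *ᵥ g n)) :=
    fun n => lt_of_lt_of_le (mul_pos hμpos (hPpos n)) (hQgeμP n)
  have hMGlb : ∀ n, 1/L ≤ alphaMG n := by
    intro n
    rw [hMG, div_le_div_iff₀ hLpos (hQpos n)]
    calc 1 * (g n ⬝ᵥ A *ᵥ (A *ᵥ g n)) = g n ⬝ᵥ A *ᵥ (A *ᵥ g n) := one_mul _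
      _ ≤ L * (g n ⬝ᵥ A *ᵥ g n) := hQleLP n
      _ = (g n ⬝ᵥ A *ᵥ g n) * L := mul_comm _ _
  have hMGub : ∀ n, alphaMG n ≤ 1/μ := by
    intro n
    rw [hMG]
    rw [div_le_div_iff₀ (hQpos n) hμpos]
    calc (g n ⬝ᵥ A *ᵥ g n) * μ = μ * (g n ⬝ᵥ A *ᵥ g n) := mul_comm _ _
      _ ≤ (g n ⬝ᵥ A *ᵥ (A *ᵥ g n)) := hQgeμP n
      _ = (g n ⬝ᵥ A *ᵥ (A *ᵥ g n)) * 1 := (mul_one _).symm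
      _ = 1 * (g n ⬝ᵥ A *ᵥ (A *ᵥ g n)) := by ring
  have hMGpos : ∀ n, 0 < alphaMG n := fun n => lt_of_lt_of_le (by positivity) (hMGlb n)
  -- steplength structure over the cycles
  set T := d1 + d2 with hT
  have hTpos : 0 < T := by omega
  have hmodlem : ∀ n, n % T ≠ 0 → (n-1) % T = n % T - 1 ∧ n ≠ 0 := by
    intro n h
    constructor
    · have hd := Nat.div_add_mod n T
      have hr : n % T < T := Nat.mod_lt _ hTpos
      have h1 : n - 1 = (n % T - 1) + T * (n / T) := by omega
      rw [h1, Nat.add_mul_mod_self_left, Nat.mod_eq_of_lt (by omega)]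
    · intro h0; subst h0; simp at h
  have Hstep : ∀ n, 1/(2*L) ≤ alpha n ∧
      ∃ m, m ≤ n ∧ alpha n ≤ alphaMG m ∧ n - m + d1 ≤ max d1 (n % T) := by
    intro n
    induction n using Nat.strong_induction_on with
    | _ n IH =>
      rcases lt_or_ge (n % T) d1 with hlt | hge
      · have ha : alpha n = alphaMG n := by rw [halpha n, if_pos hlt]
        refine ⟨?_, n, le_refl _, le_of_eq ha, by simp⟩
        rw [ha]
        calc 1/(2*L) ≤ 1/L := by
              apply one_div_le_one_div_of_le hLpos; linarith
          _ ≤ alphaMG n := hMGlb n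
      · have hnlt : ¬ (n % T < d1) := not_lt.mpr hge
        rcases eq_or_lt_of_le hge with heq | hgt
        · -- A2 branch
          have ha : alpha n = (1 / alphaMG (n - 1) + 1 / alphaMG n)⁻¹ := by
            rw [halpha n, if_neg hnlt, if_pos heq.symm]
          have hsum_pos : 0 < 1 / alphaMG (n - 1) + 1 / alphaMG n := by
            have := hMGpos (n-1); have := hMGpos n; positivity
          have hsum_le : 1 / alphaMG (n - 1) + 1 / alphaMG n ≤ 2 * L := by
            have h1 : 1 / alphaMG (n-1) ≤ L := by
              rw [div_le_iff₀ (hMGpos (n-1))]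
              calc (1:ℝ) = L * (1/L) := by field_simp
                _ ≤ L * alphaMG (n-1) := by
                  apply mul_le_mul_of_nonneg_left (hMGlb (n-1)) (le_of_lt hLpos)
            have h2 : 1 / alphaMG n ≤ L := by
              rw [div_le_iff₀ (hMGpos n)]
              calc (1:ℝ) = L * (1/L) := by field_simp
                _ ≤ L * alphaMG n := by
                  apply mul_le_mul_of_nonneg_left (hMGlb n) (le_of_lt hLpos)
            linarith
          constructor
          · rw [ha, one_div]
            exact inv_anti₀ hsum_pos hsum_le
          · refine ⟨n, le_refl _, ?_, by simp⟩
            rw [ha]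
            have h3 : 1 / alphaMG n ≤ 1 / alphaMG (n - 1) + 1 / alphaMG n :=
              le_add_of_nonneg_left (by have := hMGpos (n-1); positivity)
            calc (1 / alphaMG (n - 1) + 1 / alphaMG n)⁻¹ ≤ (1 / alphaMG n)⁻¹ := by
                  apply inv_anti₀ (by have := hMGpos n; positivity) h3
              _ = alphaMG n := by simp
        · -- constant branch
          have hne2 : ¬ (n % T = d1) := by omega
          have ha : alpha n = alpha (n-1) := by rw [halpha n, if_neg hnlt, if_neg hne2]
          have hmod : (n-1) % T = n % T - 1 ∧ n ≠ 0 := hmodlem n (by omega)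
          have hn1 : n - 1 < n := by omega
          obtain ⟨hlb, m, hm, ham, hcnt⟩ := IH (n-1) hn1
          refine ⟨by rw [ha]; exact hlb, m, by omega, by rw [ha]; exact ham, ?_⟩
          have hrlt : n % T < T := Nat.mod_lt _ hTpos
          rw [hmod.1] at hcnt
          have := hmod.2
          rcases le_or_gt m (n-1) with h | h
          · omega
          · omega
  -- growth and contraction constants
  obtain ⟨M, hMdef⟩ : ∃ x : ℝ, x = L / μ := ⟨_, rfl⟩
  have hMpos : 0 < M := hMdef ▸ div_pos hLpos hμpos
  have hM1 : 1 ≤ M := hMdef ▸ (one_le_div hμpos).mpr hμL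
  have halpha_lb : ∀ n, 1/(2*L) ≤ alpha n := fun n => (Hstep n).1
  have halpha_pos : ∀ n, 0 < alpha n :=
    fun n => lt_of_lt_of_le (by have := hLpos; positivity) (halpha_lb n)
  have halpha_ub : ∀ n, alpha n ≤ 1/μ := by
    intro n
    obtain ⟨-, m, -, ham, -⟩ := Hstep n
    exact le_trans ham (hMGub m)
  have habs : ∀ i n, |c i (n+1)| ≤ M * |c i n| := by
    intro i n
    rw [hrec i n, abs_mul]
    apply mul_le_mul_of_nonneg_right _ (abs_nonneg _)
    have hal : alpha n * lam i ≤ M := by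
      calc alpha n * lam i ≤ (1/μ) * L :=
            mul_le_mul (halpha_ub n) (hleL i) (hlam i).le (by have := hμpos; positivity)
        _ = M := by rw [hMdef]; ring
    have hal0 : 0 < alpha n * lam i := mul_pos (halpha_pos n) (hlam i)
    rw [abs_le]
    constructor <;> linarith
  have hsq : ∀ i n, (c i (n+1))^2 ≤ M^2 * (c i n)^2 := by
    intro i n
    have h1 := pow_le_pow_left₀ (abs_nonneg _) (habs i n) 2
    rw [sq_abs, mul_pow, sq_abs] at h1
    exact h1
  have hgrow : ∀ (i : Fin N) (m k : ℕ), (c i (m+k))^2 ≤ M^(2*k) * (c i m)^2 := by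
    intro i m k
    induction k with
    | zero => simp
    | succ k IH =>
      have h1 : (c i (m+k+1))^2 ≤ M^2 * (c i (m+k))^2 := hsq i (m+k)
      have h2 : M^2 * (c i (m+k))^2 ≤ M^2 * (M^(2*k) * (c i m)^2) :=
        mul_le_mul_of_nonneg_left IH (sq_nonneg M)
      have h3 : M^2 * (M^(2*k) * (c i m)^2) = M^(2*(k+1)) * (c i m)^2 := by
        have he : 2*(k+1) = 2*k + 2 := by ring
        rw [he, pow_add]; ring
      calc (c i (m + (k+1)))^2 = (c i (m+k+1))^2 := by rw [Nat.add_assoc]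
        _ ≤ M^2 * (c i (m+k))^2 := h1
        _ = M^2 * (c i (m+k))^2 := rfl
        _ ≤ M^(2*(k+1)) * (c i m)^2 := by rw [← h3]; exact h2
  -- main induction on the number of smaller eigenvalues
  have key : ∀ (K : ℕ) (i : Fin N),
      (Finset.univ.filter fun j => lam j < lam i).card < K →
      Tendsto (fun n => c i n) atTop (𝓝 0) := by
    intro K
    induction K with
    | zero => intro i h; exact absurd h (Nat.not_lt_zero _)
    | succ K IHK =>
      intro i hcard
      have IHlow : ∀ j, lam j < lam i → Tendsto (fun n => c j n) atTop (𝓝 0) := by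
        intro j hj
        apply IHK j
        have hss : (Finset.univ.filter fun k => lam k < lam j) ⊂
            (Finset.univ.filter fun k => lam k < lam i) := by
          constructor
          · intro k hk
            rw [Finset.mem_filter] at *
            exact ⟨hk.1, lt_trans hk.2 hj⟩
          · intro hsub
            have hjmem : j ∈ (Finset.univ.filter fun k => lam k < lam i) :=
              Finset.mem_filter.mpr ⟨Finset.mem_univ _, hj⟩
            have := hsub hjmem
            rw [Finset.mem_filter] at this
            exact lt_irrefl _ this.2
        have := Finset.card_lt_card hss
        omega
      obtain ⟨low, hlowdef⟩ : ∃ s, s = Finset.univ.filter (fun j => lam j < lam i) :=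
        ⟨_, rfl⟩
      rw [← hlowdef] at hcard
      obtain ⟨δ, hδdef⟩ : ∃ f : ℕ → ℝ, f = fun n => ∑ j ∈ low, lam j * (c j n)^2 :=
        ⟨_, rfl⟩
      have hδn : ∀ n, δ n = ∑ j ∈ low, lam j * (c j n)^2 := fun n => by rw [hδdef]
      have hδ0 : ∀ n, 0 ≤ δ n := fun n => by
        rw [hδn]
        exact Finset.sum_nonneg fun j _ => mul_nonneg (hlam j).le (sq_nonneg _)
      have hδ : Tendsto δ atTop (𝓝 0) := by
        have h1 : ∀ j ∈ low, Tendsto (fun n => lam j * (c j n)^2) atTop (𝓝 0) := by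
          intro j hj
          rw [hlowdef] at hj
          have hjlt : lam j < lam i := (Finset.mem_filter.mp hj).2
          have h2 := (IHlow j hjlt).mul (IHlow j hjlt)
          rw [mul_zero] at h2
          have h3 := h2.const_mul (lam j)
          rw [mul_zero] at h3
          exact h3.congr (fun n => by ring)
        have h4 := tendsto_finset_sum low h1
        rw [hδdef]
        simpa using h4
      -- the key spectral estimate
      have hest : ∀ (m : ℕ) (e' : ℝ), 0 < e' → δ m ≤ lam i * e' / 2 →
          e' ≤ (c i m)^2 → alphaMG m * lam i ≤ 3/2 := by
        intro m e' he' hδm hce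
        set S1 := ∑ j ∈ Finset.univ.filter (fun j => ¬ lam j < lam i), lam j * (c j m)^2
          with hS1def
        have hsplit : g m ⬝ᵥ (A *ᵥ g m) = δ m + S1 := by
          rw [hP m, hδn, hS1def, hlowdef]
          exact (Finset.sum_filter_add_sum_filter_not _ _ _).symm
        have hS1i : lam i * (c i m)^2 ≤ S1 := by
          apply Finset.single_le_sum (f := fun j => lam j * (c j m)^2)
            (fun j _ => mul_nonneg (hlam j).le (sq_nonneg _))
          exact Finset.mem_filter.mpr ⟨Finset.mem_univ _, lt_irrefl _⟩
        have hci : 0 < (c i m)^2 := lt_of_lt_of_le he' hce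
        have hS1pos : 0 < S1 := lt_of_lt_of_le (mul_pos (hlam i) hci) hS1i
        have hQge : lam i * S1 ≤ g m ⬝ᵥ (A *ᵥ (A *ᵥ g m)) := by
          rw [hQ m]
          calc lam i * S1 = ∑ j ∈ Finset.univ.filter (fun j => ¬ lam j < lam i),
                lam i * (lam j * (c j m)^2) := by rw [hS1def, Finset.mul_sum]
            _ ≤ ∑ j ∈ Finset.univ.filter (fun j => ¬ lam j < lam i),
                (lam j)^2 * (c j m)^2 := by
              apply Finset.sum_le_sum
              intro j hj
              have hji : lam i ≤ lam j := not_lt.mp (Finset.mem_filter.mp hj).2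
              calc lam i * (lam j * (c j m)^2) ≤ lam j * (lam j * (c j m)^2) :=
                    mul_le_mul_of_nonneg_right hji
                      (mul_nonneg (hlam j).le (sq_nonneg _))
                _ = (lam j)^2 * (c j m)^2 := by ring
            _ ≤ ∑ j, (lam j)^2 * (c j m)^2 := by
              apply Finset.sum_le_sum_of_subset_of_nonneg (Finset.filter_subset _ _)
              intro j _ _
              positivity
        have hle2 : lam i * e' ≤ S1 :=
          le_trans (mul_le_mul_of_nonneg_left hce (hlam i).le) hS1i
        rw [hMG m, div_mul_eq_mul_div, div_le_iff₀ (hQpos m)]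
        have hf1 : lam i * δ m ≤ lam i * (lam i * e' / 2) :=
          mul_le_mul_of_nonneg_left hδm (hlam i).le
        have hf2 : lam i * (lam i * e') ≤ lam i * S1 :=
          mul_le_mul_of_nonneg_left hle2 (hlam i).le
        rw [hsplit]
        nlinarith [hQge]
      -- contraction factor
      obtain ⟨ρ, hρdef⟩ : ∃ x : ℝ, x = 1 - lam i / (2*L) := ⟨_, rfl⟩
      have hρhalf : 1/2 ≤ ρ := by
        rw [hρdef]
        have h1 : lam i / (2*L) ≤ 1/2 := by
          rw [div_le_iff₀ (by have := hLpos; positivity)]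
          calc lam i ≤ L := hleL i
            _ = 1/2 * (2*L) := by ring
        linarith
      have hρlt : ρ < 1 := by
        rw [hρdef]
        have : 0 < lam i / (2*L) := div_pos (hlam i) (by linarith)
        linarith
      have hρpos : 0 < ρ := lt_of_lt_of_le (by norm_num) hρhalf
      -- main claim
      have claim : ∀ e : ℝ, 0 < e → ∀ᶠ n in atTop, (c i n)^2 < M^2 * e := by
        intro e he
        obtain ⟨ε', hε'def⟩ : ∃ x : ℝ, x = e / M^(2*T) := ⟨_, rfl⟩
        have hε' : 0 < ε' := hε'def ▸ div_pos he (pow_pos hMpos _)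
        obtain ⟨N0, hN0⟩ := Metric.tendsto_atTop.mp hδ
          (lam i * ε' / 2) (div_pos (mul_pos (hlam i) hε') two_pos)
        have hδbound : ∀ n, N0 ≤ n → δ n ≤ lam i * ε' / 2 := by
          intro n hn
          have := hN0 n hn
          rw [Real.dist_eq, sub_zero] at this
          calc δ n ≤ |δ n| := le_abs_self _
            _ ≤ lam i * ε' / 2 := le_of_lt this
        have hcontr : ∀ n, N0 + T ≤ n → e ≤ (c i n)^2 →
            (c i (n+1))^2 ≤ ρ^2 * (c i n)^2 := by
          intro n hn hce
          obtain ⟨hlb, m, hm, ham, hcnt⟩ := Hstep n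
          have hrT : n % T < T := Nat.mod_lt _ hTpos
          have hmax : max d1 (n % T) ≤ T - 1 := max_le (by omega) (by omega)
          have hnm : n - m ≤ T := by omega
          have hmge : N0 ≤ m := by omega
          have hgrown : (c i n)^2 ≤ M^(2*T) * (c i m)^2 := by
            have h1 : (c i (m + (n-m)))^2 ≤ M^(2*(n-m)) * (c i m)^2 := hgrow i m (n-m)
            rw [Nat.add_sub_cancel' hm] at h1
            calc (c i n)^2 ≤ M^(2*(n-m)) * (c i m)^2 := h1
              _ ≤ M^(2*T) * (c i m)^2 := by
                apply mul_le_mul_of_nonneg_right _ (sq_nonneg _)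
                exact pow_le_pow_right₀ hM1 (by omega)
          have hpowpos : (0:ℝ) < M^(2*T) := by positivity
          have hcm : ε' ≤ (c i m)^2 := by
            rw [hε'def, div_le_iff₀ hpowpos]
            calc e ≤ (c i n)^2 := hce
              _ ≤ M^(2*T) * (c i m)^2 := hgrown
              _ = (c i m)^2 * M^(2*T) := mul_comm _ _
          have hMGm : alphaMG m * lam i ≤ 3/2 := hest m ε' hε' (hδbound m hmge) hcm
          have hαup : alpha n * lam i ≤ 3/2 :=
            le_trans (mul_le_mul_of_nonneg_right ham (hlam i).le) hMGm
          have hαlow : lam i / (2*L) ≤ alpha n * lam i := by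
            calc lam i / (2*L) = (1/(2*L)) * lam i := by ring
              _ ≤ alpha n * lam i := mul_le_mul_of_nonneg_right hlb (hlam i).le
          have ht1 : 1 - alpha n * lam i ≤ ρ := by rw [hρdef]; linarith
          have ht2 : -ρ ≤ 1 - alpha n * lam i := by
            have : (3:ℝ)/2 ≤ 1 + ρ := by linarith
            linarith
          have hts : (1 - alpha n * lam i)^2 ≤ ρ^2 := sq_le_sq' ht2 ht1
          rw [hrec i n, mul_pow]
          exact mul_le_mul_of_nonneg_right hts (sq_nonneg _)
        have hbelow : ∃ n1, N0 + T ≤ n1 ∧ (c i n1)^2 < e := by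
          by_contra hcon
          push_neg at hcon
          set N2 := N0 + T with hN2
          have hdec : ∀ k, (c i (N2+k))^2 ≤ ρ^(2*k) * (c i N2)^2 := by
            intro k
            induction k with
            | zero => simp
            | succ k IH =>
              have h1 : (c i (N2+k+1))^2 ≤ ρ^2 * (c i (N2+k))^2 :=
                hcontr (N2+k) (by omega) (hcon _ (by omega))
              have h2 : ρ^2 * (c i (N2+k))^2 ≤ ρ^2 * (ρ^(2*k) * (c i N2)^2) :=
                mul_le_mul_of_nonneg_left IH (sq_nonneg ρ)
              have he2 : 2*(k+1) = 2*k + 2 := by ring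
              calc (c i (N2+(k+1)))^2 = (c i (N2+k+1))^2 := by
                    rw [show N2 + (k + 1) = N2 + k + 1 by omega]
                _ ≤ ρ^2 * (ρ^(2*k) * (c i N2)^2) := le_trans h1 h2
                _ = ρ^(2*(k+1)) * (c i N2)^2 := by rw [he2, pow_add]; ring
          have hcpos : 0 < (c i N2)^2 := lt_of_lt_of_le he (hcon N2 (le_refl _))
          have hρsq : ρ^2 < 1 := by nlinarith
          obtain ⟨k, hk⟩ := exists_pow_lt_of_lt_one
            (show 0 < e / (c i N2)^2 from div_pos he hcpos) hρsq
          have h5 : ρ^(2*k) * (c i N2)^2 < e := by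
            rw [pow_mul]
            rw [lt_div_iff₀ hcpos] at hk
            exact hk
          have h6 := hcon (N2+k) (by omega)
          have h7 := hdec k
          linarith
        obtain ⟨n1, hn1ge, hn1lt⟩ := hbelow
        have hinv : ∀ n, n1 ≤ n → (c i n)^2 < M^2 * e := by
          intro n hn
          induction n, hn using Nat.le_induction with
          | base =>
            calc (c i n1)^2 < e := hn1lt
              _ ≤ M^2 * e := le_mul_of_one_le_left he.le (by nlinarith [hM1])
          | succ n hn IH =>
            by_cases hce : e ≤ (c i n)^2
            · have h1 := hcontr n (by omega) hce
              have h2 : ρ^2 ≤ 1 := by nlinarith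
              calc (c i (n+1))^2 ≤ ρ^2 * (c i n)^2 := h1
                _ ≤ 1 * (c i n)^2 := mul_le_mul_of_nonneg_right h2 (sq_nonneg _)
                _ = (c i n)^2 := one_mul _
                _ < M^2 * e := IH
            · push_neg at hce
              calc (c i (n+1))^2 ≤ M^2 * (c i n)^2 := hsq i n
                _ < M^2 * e := by
                  apply mul_lt_mul_of_pos_left hce (pow_pos hMpos 2)
        exact eventually_atTop.mpr ⟨n1, hinv⟩
      -- conclude componentwise convergence
      have h2 : Tendsto (fun n => (c i n)^2) atTop (𝓝 0) := by
        rw [Metric.tendsto_atTop]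
        intro e he
        have hM2 : (0:ℝ) < M^2 := pow_pos hMpos 2
        obtain ⟨n1, hn1⟩ := eventually_atTop.mp (claim (e / M^2) (div_pos he hM2))
        refine ⟨n1, fun n hn => ?_⟩
        rw [Real.dist_eq, sub_zero, abs_of_nonneg (sq_nonneg _)]
        calc (c i n)^2 < M^2 * (e / M^2) := hn1 n hn
          _ = e := by field_simp
      have h3 : Tendsto (fun n => |c i n|) atTop (𝓝 0) := by
        have h4 := (Real.continuous_sqrt.tendsto 0).comp h2
        rw [Real.sqrt_zero] at h4
        exact h4.congr (fun n => Real.sqrt_sq_eq_abs _)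
      exact (tendsto_zero_iff_abs_tendsto_zero _).mpr h3
  have hconv : ∀ i, Tendsto (fun n => c i n) atTop (𝓝 0) :=
    fun i => key ((Finset.univ.filter fun j => lam j < lam i).card + 1) i (Nat.lt_succ_self _)
  -- convergence of g
  have hGt : Tendsto (fun n => (WithLp.toLp 2 (g n : Fin N → ℝ) : EuclideanSpace ℝ (Fin N))) atTop
      (𝓝 (0 : EuclideanSpace ℝ (Fin N))) := by
    have hrepr : ∀ n, (WithLp.toLp 2 (g n : Fin N → ℝ) : EuclideanSpace ℝ (Fin N)) = ∑ i, c i n • V i := by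
      intro n
      rw [← V.sum_repr (WithLp.toLp 2 (g n : Fin N → ℝ) : EuclideanSpace ℝ (Fin N))]
      congr 1; funext i
      rw [V.repr_apply_apply, hcEq]
    have h1 : ∀ i ∈ Finset.univ, Tendsto (fun n => c i n • V i) atTop
        (𝓝 (0 : EuclideanSpace ℝ (Fin N))) := by
      intro i _
      have h2 := (hconv i).smul_const (V i)
      rwa [zero_smul] at h2
    have h3 := tendsto_finset_sum Finset.univ h1
    rw [Finset.sum_const, smul_zero] at h3
    exact h3.congr (fun n => (hrepr n).symm)
  have h4 := ((PiLp.continuousLinearEquiv 2 ℝ (fun _ : Fin N => ℝ)).continuous.tendsto _).comp hGt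
  rw [map_zero] at h4
  refine Filter.Tendsto.congr
    (f₁ := ⇑(PiLp.continuousLinearEquiv 2 ℝ (fun _ : Fin N => ℝ)) ∘
      fun n => (WithLp.toLp 2 (g n : Fin N → ℝ) : EuclideanSpace ℝ (Fin N))) (fun n => ?_) h4
  rfl
end

section
/- Consider the linear system Ax = b where A ∈ ℝ^{N×N} is symmetric positive definite, and let x_* = A⁻¹ b. Fix integers d_1, d_2 ≥ 1. Let the iterates be generated by x_{n+1} = x_n − α_n g_n with g_n = A x_n − b and the MGC steplength: α_n = α_n^MG = (g_nᵀ A g_n)/(g_nᵀ A² g_n) if n mod (d_1+d_2) < d_1; α_n = α_n^Y2 = 2 (√((1/α_{n−1}^MG − 1/α_n^MG)² + 4 (g_nᵀ A g_n)/((α_{n−1}^MG)² g_{n−1}ᵀ A g_{n−1})) + 1/α_{n−1}^MG + 1/α_n^MG)^{−1} if n mod (d_1+d_2) = d_1; and α_n = α_{n−1} otherwise (the iteration terminates if some g_n = 0, in which case x_n = x_*). Then the sequence {x_n} converges to x_* for any starting point x_0. -/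
open Filter Topology Matrix

/-- Abstract convergence lemma for a nonnegative-contraction/occasional-smallness sequence. -/
lemma mgc_abs_seq_tendsto_zero
    (u K e : ℕ → ℝ) (t : ℕ → ℕ) (C ρ : ℝ) (c : ℕ)
    (hc : 1 ≤ c) (hC : 1 ≤ C) (hρ0 : 0 ≤ ρ) (hρ1 : ρ < 1)
    (hKC : ∀ n, K n ≤ C)
    (hrec : ∀ n, |u (n + 1)| ≤ K n * |u n|)
    (ht1 : ∀ n, t n ≤ n) (ht2 : ∀ n, n < t n + c)
    (he : Tendsto e atTop (𝓝 0)) (he0 : ∀ n, 0 ≤ e n)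
    (hdich : ∀ n, K n ≤ ρ ∨ |u (t n)| ≤ e (t n)) :
    Tendsto u atTop (𝓝 0) := by
  have hC0 : (0:ℝ) < C := lt_of_lt_of_le one_pos hC
  have hgrow : ∀ m k, |u (m + k)| ≤ C ^ k * |u m| := by
    intro m k
    induction k with
    | zero => simp
    | succ k ih =>
      calc |u (m + k + 1)| ≤ K (m + k) * |u (m + k)| := hrec (m + k)
        _ ≤ C * (C ^ k * |u m|) := by
            apply mul_le_mul (hKC _) ih (abs_nonneg _) hC0.le
        _ = C ^ (k + 1) * |u m| := by ring
  have main : ∀ δ : ℝ, 0 < δ → ∀ᶠ n in atTop, |u n| ≤ δ := by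
    intro δ hδ
    have hCc : (0:ℝ) < C ^ c := pow_pos hC0 c
    have hδ' : (0:ℝ) < δ / C ^ c := div_pos hδ hCc
    obtain ⟨n₀, hn₀⟩ := (Metric.tendsto_atTop.1 he) (δ / C ^ c) hδ'
    have hn₀' : ∀ m, n₀ ≤ m → e m ≤ δ / C ^ c := by
      intro m hm
      have := hn₀ m hm
      rw [Real.dist_eq, sub_zero, abs_of_nonneg (he0 m)] at this
      exact this.le
    set M := n₀ + c with hM
    have claim : ∀ n, M ≤ n → |u n| ≤ max (ρ ^ (n - M) * |u M|) δ := by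
      intro n hn
      induction n, hn using Nat.le_induction with
      | base => simp
      | succ n hn ih =>
        rcases hdich n with hgood | hbad
        · have h1 : |u (n + 1)| ≤ ρ * |u n| :=
            (hrec n).trans (mul_le_mul_of_nonneg_right hgood (abs_nonneg _))
          have h2 : ρ * |u n| ≤ max (ρ ^ (n + 1 - M) * |u M|) δ := by
            calc ρ * |u n| ≤ ρ * max (ρ ^ (n - M) * |u M|) δ :=
                  mul_le_mul_of_nonneg_left ih hρ0
              _ = max (ρ * (ρ ^ (n - M) * |u M|)) (ρ * δ) := by
                  rw [mul_max_of_nonneg _ _ hρ0]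
              _ ≤ max (ρ ^ (n + 1 - M) * |u M|) δ := by
                  apply max_le_max
                  · have : n + 1 - M = (n - M) + 1 := by omega
                    rw [this]; ring_nf; rfl
                  · nlinarith
          exact h1.trans h2
        · have htn : n₀ ≤ t n := by have := ht2 n; omega
          have hk : n + 1 - t n ≤ c := by have := ht2 n; omega
          have heq : t n + (n + 1 - t n) = n + 1 := by have := ht1 n; omega
          have h1 : |u (n + 1)| ≤ C ^ (n + 1 - t n) * |u (t n)| := by
            have := hgrow (t n) (n + 1 - t n); rwa [heq] at this
          have h2 : C ^ (n + 1 - t n) * |u (t n)| ≤ C ^ c * (δ / C ^ c) := by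
            apply mul_le_mul (pow_le_pow_right₀ hC hk)
              (hbad.trans (hn₀' _ htn)) (abs_nonneg _) hCc.le
          have h3 : C ^ c * (δ / C ^ c) = δ := by field_simp
          exact le_max_of_le_right (h1.trans (h2.trans_eq h3))
    have hpow : Tendsto (fun n => ρ ^ (n - M) * |u M|) atTop (𝓝 0) := by
      have h1 : Tendsto (fun k : ℕ => ρ ^ k) atTop (𝓝 0) :=
        tendsto_pow_atTop_nhds_zero_of_lt_one hρ0 hρ1
      have h2 : Tendsto (fun n : ℕ => n - M) atTop atTop :=
        tendsto_sub_atTop_nat M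
      simpa using (h1.comp h2).mul_const |u M|
    have hev : ∀ᶠ n in atTop, ρ ^ (n - M) * |u M| ≤ δ := by
      have := hpow.eventually (eventually_le_nhds hδ)
      filter_upwards [this] with n hn using by simpa using hn
    filter_upwards [hev, eventually_ge_atTop M] with n h1 h2
    exact (claim n h2).trans (max_le h1 le_rfl)
  rw [NormedAddCommGroup.tendsto_nhds_zero]
  intro ε hε
  filter_upwards [main (ε / 2) (by linarith)] with n hn
  rw [Real.norm_eq_abs]
  linarith

set_option maxHeartbeats 1600000 in
/-- Convergence of the minimal gradient method with constant steplength (MGC):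
the gradient iteration using the MG steplength `(g_nᵀ A g_n)/(g_nᵀ A² g_n)` for the
first `d₁` steps of each cycle of length `d₁ + d₂`, the auxiliary Yuan-type steplength
`α_n^Y2` once, and then keeping the steplength constant for the rest of the cycle,
converges to `x_* = A⁻¹ b` from any starting point.  (If some `g_n = 0`, the iterate
is already `x_*` and stays there, since the update `−α_n g_n` then vanishes.) -/
theorem mgc_converges
    (N : ℕ)
    (A : Matrix (Fin N) (Fin N) ℝ) (b : Fin N → ℝ)
    (hA : A.PosDef)
    (d1 d2 : ℕ) (hd1 : 1 ≤ d1) (hd2 : 1 ≤ d2)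
    (x g : ℕ → Fin N → ℝ) (alphaMG alpha : ℕ → ℝ)
    (hg : ∀ n, g n = A.mulVec (x n) - b)
    (hMG : ∀ n, alphaMG n =
      (g n ⬝ᵥ A.mulVec (g n)) / (g n ⬝ᵥ A.mulVec (A.mulVec (g n))))
    (halpha : ∀ n, alpha n =
      if n % (d1 + d2) < d1 then alphaMG n
      else if n % (d1 + d2) = d1 then
        2 * (Real.sqrt ((1 / alphaMG (n - 1) - 1 / alphaMG n) ^ 2 +
              4 * (g n ⬝ᵥ A.mulVec (g n)) /
                ((alphaMG (n - 1)) ^ 2 * (g (n - 1) ⬝ᵥ A.mulVec (g (n - 1))))) +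
            1 / alphaMG (n - 1) + 1 / alphaMG n)⁻¹
      else alpha (n - 1))
    (hx : ∀ n, x (n + 1) = x n - alpha n • g n)
    (xstar : Fin N → ℝ) (hxstar : A.mulVec xstar = b) :
    Tendsto x atTop (𝓝 xstar) := by
  by_cases hzero : ∃ m, g m = 0
  · -- degenerate case : the iteration has reached the solution and stays there
    obtain ⟨m, hm⟩ := hzero
    have hxconst : ∀ k, x (m + k) = x m := by
      intro k
      induction k with
      | zero => rfl
      | succ k ih =>
        have hgk : g (m + k) = 0 := by rw [hg, ih, ← hg, hm]
        show x ((m + k) + 1) = x m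
        rw [hx, hgk, smul_zero, sub_zero, ih]
    have hxm : x m = xstar := by
      have h0 : A.mulVec (x m - xstar) = 0 := by
        rw [Matrix.mulVec_sub, hxstar]
        have h1 := hg m
        rw [hm] at h1
        have h2 : A.mulVec (x m) = b := by
          have := h1.symm
          rwa [sub_eq_zero] at this
        rw [h2, sub_self]
      by_contra hne
      have hne' : x m - xstar ≠ 0 := sub_ne_zero.2 hne
      have := hA.dotProduct_mulVec_pos hne'
      rw [h0] at this
      simp at this
    apply tendsto_atTop_of_eventually_const (i₀ := m)
    intro n hn
    obtain ⟨k, rfl⟩ := Nat.exists_eq_add_of_le hn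
    rw [hxconst k, hxm]
  · push_neg at hzero
    -- main case : g n ≠ 0 for all n
    have hNE : Nonempty (Fin N) := by
      rcases Nat.eq_zero_or_pos N with h | h
      · exfalso
        apply hzero 0
        funext i
        exact absurd i.2 (by omega)
      · exact ⟨⟨0, h⟩⟩
    set c := d1 + d2 with hcdef
    have hcpos : 0 < c := by omega
    set lam := hA.1.eigenvalues with hlamdef
    set v := hA.1.eigenvectorBasis with hvdef
    have hlpos : ∀ i, 0 < lam i := hA.eigenvalues_pos
    -- the eigencoordinates of the gradients
    set μ : Fin N → ℕ → ℝ := fun i n => (v i : Fin N → ℝ) ⬝ᵥ g n with hμdef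
    have F1 : ∀ (y : Fin N → ℝ) (i : Fin N),
        (v i : Fin N → ℝ) ⬝ᵥ (A.mulVec y) = lam i * ((v i : Fin N → ℝ) ⬝ᵥ y) := by
      intro y i
      rw [dotProduct_mulVec]
      have hsym : (v i : Fin N → ℝ) ᵥ* A = lam i • (v i : Fin N → ℝ) := by
        rw [← Matrix.mulVec_transpose]
        rw [← Matrix.conjTranspose_eq_transpose_of_trivial, hA.1.eq]
        exact hA.1.mulVec_eigenvectorBasis i
      rw [hsym, smul_dotProduct, smul_eq_mul]
    have hrepr : ∀ (z : Fin N → ℝ) (i : Fin N), v.repr (WithLp.toLp 2 z) i = (v i : Fin N → ℝ) ⬝ᵥ z := by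
      intro z i
      rw [v.repr_apply_apply]
      simp [PiLp.inner_apply, dotProduct, RCLike.inner_apply, mul_comm]
    have F2 : ∀ (y z : Fin N → ℝ),
        y ⬝ᵥ z = ∑ i, ((v i : Fin N → ℝ) ⬝ᵥ y) * ((v i : Fin N → ℝ) ⬝ᵥ z) := by
      intro y z
      have h := v.repr.inner_map_map (WithLp.toLp 2 z : EuclideanSpace ℝ (Fin N)) (WithLp.toLp 2 y : EuclideanSpace ℝ (Fin N))
      simp only [PiLp.inner_apply, RCLike.inner_apply, starRingEnd_apply, star_trivial] at h
      calc y ⬝ᵥ z = ∑ i, y i * z i := rfl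
        _ = ∑ i, v.repr (WithLp.toLp 2 y) i * v.repr (WithLp.toLp 2 z) i := h.symm
        _ = ∑ i, ((v i : Fin N → ℝ) ⬝ᵥ y) * ((v i : Fin N → ℝ) ⬝ᵥ z) :=
            Finset.sum_congr rfl fun i _ => by rw [hrepr, hrepr]
    clear_value lam v
    set P : ℕ → ℝ := fun n => g n ⬝ᵥ A.mulVec (g n) with hPdef
    set Q : ℕ → ℝ := fun n => g n ⬝ᵥ A.mulVec (A.mulVec (g n)) with hQdef
    have hPsum : ∀ n, P n = ∑ i, lam i * μ i n ^ 2 := by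
      intro n
      show g n ⬝ᵥ A.mulVec (g n) = _
      rw [F2]
      exact Finset.sum_congr rfl fun i _ => by rw [F1]; show _ = lam i * μ i n ^ 2; ring
    have hQsum : ∀ n, Q n = ∑ i, lam i ^ 2 * μ i n ^ 2 := by
      intro n
      show g n ⬝ᵥ A.mulVec (A.mulVec (g n)) = _
      rw [F2]
      exact Finset.sum_congr rfl fun i _ => by
        rw [F1, F1]; show _ = lam i ^ 2 * μ i n ^ 2; ring
    have hPpos : ∀ n, 0 < P n := by
      intro n
      have := hA.dotProduct_mulVec_pos (hzero n)
      simpa using this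
    have hμeq : ∀ i n, μ i n = (v i : Fin N → ℝ) ⬝ᵥ g n := fun _ _ => rfl
    have hMG' : ∀ n, alphaMG n = P n / Q n := hMG
    have halphaP : ∀ n, alpha n =
        if n % c < d1 then alphaMG n
        else if n % c = d1 then
          2 * (Real.sqrt ((1 / alphaMG (n - 1) - 1 / alphaMG n) ^ 2 +
                4 * P n / ((alphaMG (n - 1)) ^ 2 * P (n - 1))) +
              1 / alphaMG (n - 1) + 1 / alphaMG n)⁻¹
        else alpha (n - 1) := halpha
    -- gradient recurrence in eigencoordinates
    have hgrec : ∀ n, g (n + 1) = g n - alpha n • A.mulVec (g n) := by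
      intro n
      rw [hg (n + 1), hx n, Matrix.mulVec_sub, Matrix.mulVec_smul, hg n]
      abel
    have hμrec : ∀ i n, μ i (n + 1) = (1 - alpha n * lam i) * μ i n := by
      intro i n
      show (v i : Fin N → ℝ) ⬝ᵥ g (n + 1) = _
      rw [hgrec n, dotProduct_sub, dotProduct_smul, F1]
      show _ = (1 - alpha n * lam i) * ((v i : Fin N → ℝ) ⬝ᵥ g n)
      simp only [smul_eq_mul]
      ring
    clear_value μ P Q
    -- extreme eigenvalues
    set l := Finset.univ.inf' Finset.univ_nonempty lam with hldef
    set L := Finset.univ.sup' Finset.univ_nonempty lam with hLdef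
    have hli : ∀ i, l ≤ lam i := fun i => Finset.inf'_le _ (Finset.mem_univ i)
    have hiL : ∀ i, lam i ≤ L := fun i => Finset.le_sup' _ (Finset.mem_univ i)
    have hl0 : 0 < l := by
      obtain ⟨i, -, hi⟩ := Finset.exists_mem_eq_inf' Finset.univ_nonempty lam
      rw [hldef, hi]
      exact hlpos i
    have hL0 : 0 < L := lt_of_lt_of_le hl0 ((hli (Classical.arbitrary _)).trans (hiL _))
    have hlL : l ≤ L := (hli (Classical.arbitrary _)).trans (hiL _)
    clear_value l L
    have hQl : ∀ n, l * P n ≤ Q n := by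
      intro n
      rw [hPsum, hQsum, Finset.mul_sum]
      apply Finset.sum_le_sum
      intro i _
      nlinarith [hli i, hlpos i, sq_nonneg (μ i n),
        mul_le_mul_of_nonneg_right (hli i) (mul_nonneg (hlpos i).le (sq_nonneg (μ i n)))]
    have hQL : ∀ n, Q n ≤ L * P n := by
      intro n
      rw [hPsum, hQsum, Finset.mul_sum]
      apply Finset.sum_le_sum
      intro i _
      nlinarith [hiL i, hlpos i, sq_nonneg (μ i n),
        mul_le_mul_of_nonneg_right (hiL i) (mul_nonneg (hlpos i).le (sq_nonneg (μ i n)))]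
    have hQpos : ∀ n, 0 < Q n := fun n => lt_of_lt_of_le (mul_pos hl0 (hPpos n)) (hQl n)
    have hMGpos : ∀ n, 0 < alphaMG n := by
      intro n; rw [hMG' n]; exact div_pos (hPpos n) (hQpos n)
    have hMGhigh : ∀ n, alphaMG n ≤ 1 / l := by
      intro n
      rw [hMG' n, div_le_div_iff₀ (hQpos n) hl0]
      have := hQl n; linarith
    have hMGlow : ∀ n, 1 / L ≤ alphaMG n := by
      intro n
      rw [hMG' n, div_le_div_iff₀ hL0 (hQpos n)]
      have := hQL n; linarith
    have hinvlow : ∀ n, l ≤ 1 / alphaMG n := by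
      intro n
      have h := one_div_le_one_div_of_le (hMGpos n) (hMGhigh n)
      rwa [one_div_one_div] at h
    have hinvhigh : ∀ n, 1 / alphaMG n ≤ L := by
      intro n
      have h := one_div_le_one_div_of_le (by positivity) (hMGlow n)
      rwa [one_div_one_div] at h
    -- uniform crude bound on the contraction factors
    set C := 1 + L / l with hCdef
    have hC1 : (1:ℝ) ≤ C := by
      have : 0 ≤ L / l := by positivity
      rw [hCdef]; linarith
    have habs : ∀ s : ℝ, 0 ≤ s → s ≤ 1 / l → ∀ i, |1 - s * lam i| ≤ C := by
      intro s h0 h1 i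
      have h2 : s * lam i ≤ (1 / l) * L :=
        mul_le_mul h1 (hiL i) (hlpos i).le (by positivity)
      have h3 : 0 ≤ s * lam i := mul_nonneg h0 (hlpos i).le
      have h4 : (1 / l) * L = L / l := by ring
      rw [h4] at h2
      rw [abs_le, hCdef]
      constructor <;> [linarith; linarith [show (0:ℝ) ≤ L / l by positivity]]
    clear_value C
    have hPgrow : ∀ n, 0 ≤ alpha n → alpha n ≤ 1 / l → P (n + 1) ≤ C ^ 2 * P n := by
      intro n h0 h1
      rw [hPsum, hPsum, Finset.mul_sum]
      apply Finset.sum_le_sum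
      intro i _
      rw [hμrec i n]
      have hzb := abs_le.1 (habs (alpha n) h0 h1 i)
      have h2 : (1 - alpha n * lam i) ^ 2 ≤ C ^ 2 := sq_le_sq' hzb.1 hzb.2
      nlinarith [mul_nonneg (hlpos i).le (sq_nonneg (μ i n)), sq_nonneg (μ i n), hlpos i,
        mul_le_mul_of_nonneg_right h2 (mul_nonneg (hlpos i).le (sq_nonneg (μ i n)))]
    -- mod arithmetic
    have hmod : ∀ n : ℕ, n % c ≠ 0 → 1 ≤ n ∧ (n - 1) % c = n % c - 1 := by
      intro n hn
      have h1 : 1 ≤ n := by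
        rcases Nat.eq_zero_or_pos n with h | h
        · exfalso; apply hn; rw [h]; exact Nat.zero_mod c
        · exact h
      refine ⟨h1, ?_⟩
      have h2 : n % c < c := Nat.mod_lt _ hcpos
      have h3 : c * (n / c) + n % c = n := Nat.div_add_mod n c
      have h4 : n - 1 = (n % c - 1) + c * (n / c) := by omega
      rw [h4, Nat.add_mul_mod_self_left]
      exact Nat.mod_eq_of_lt (by omega)
    -- the decision time of each step
    set t : ℕ → ℕ := fun n => if n % c < d1 then n else n - (n % c - d1) with htdef
    have ht1 : ∀ n, t n ≤ n := by
      intro n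
      simp only [htdef]
      split <;> omega
    have ht2 : ∀ n, n < t n + c := by
      intro n
      have h1 : n % c < c := Nat.mod_lt _ hcpos
      have h2 : n % c ≤ n := Nat.mod_le n c
      simp only [htdef]
      split <;> omega
    have htlt : ∀ n, n % c < d1 → t n = n := by
      intro n h; simp only [htdef]; rw [if_pos h]
    have hteqd : ∀ n, n % c = d1 → t n = n := by
      intro n h
      simp only [htdef]
      rw [if_neg (by omega), h]
      omega
    have htgt : ∀ n, d1 < n % c → t n = n - (n % c - d1) := by
      intro n h; simp only [htdef]; rw [if_neg (by omega)]
    clear_value t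
    -- the uniform lower bound for the steplengths
    set a := 2 / (Real.sqrt (L ^ 2 + 4 * L ^ 2 * C ^ 2) + 2 * L) with hadef
    have hsq0 : (0:ℝ) ≤ Real.sqrt (L ^ 2 + 4 * L ^ 2 * C ^ 2) := Real.sqrt_nonneg _
    have ha0 : 0 < a := by rw [hadef]; positivity
    have ha1L : a ≤ 1 / L := by
      rw [hadef, div_le_div_iff₀ (by positivity) hL0]
      nlinarith
    have h2a : 2 / a = Real.sqrt (L ^ 2 + 4 * L ^ 2 * C ^ 2) + 2 * L := by
      rw [hadef]
      have hpos : (0:ℝ) < Real.sqrt (L ^ 2 + 4 * L ^ 2 * C ^ 2) + 2 * L := by positivity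
      field_simp
    clear_value a
    have key : ∀ n, a ≤ alpha n ∧ alpha n ≤ 1 / l ∧ alpha n ≤ alphaMG (t n) := by
      intro n
      induction n using Nat.strong_induction_on with
      | _ n ih =>
      rcases lt_trichotomy (n % c) d1 with hlt | heq | hgt
      · have htn : t n = n := htlt n hlt
        have hα : alpha n = alphaMG n := by rw [halphaP n, if_pos hlt]
        rw [hα, htn]
        exact ⟨ha1L.trans (hMGlow n), hMGhigh n, le_rfl⟩
      · have hne : ¬ n % c < d1 := by omega
        have htn : t n = n := hteqd n heq
        have hα : alpha n =
            2 * (Real.sqrt ((1 / alphaMG (n - 1) - 1 / alphaMG n) ^ 2 +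
                  4 * P n / ((alphaMG (n - 1)) ^ 2 * P (n - 1))) +
                1 / alphaMG (n - 1) + 1 / alphaMG n)⁻¹ := by
          rw [halphaP n, if_neg hne, if_pos heq]
        have hc0 : n % c ≠ 0 := by omega
        obtain ⟨hn1, hpred⟩ := hmod n hc0
        have hpredlt : (n - 1) % c < d1 := by omega
        have hPn : P n ≤ C ^ 2 * P (n - 1) := by
          obtain ⟨hb1, hb2, -⟩ := ih (n - 1) (by omega)
          have h := hPgrow (n - 1) (le_trans ha0.le hb1) hb2
          rwa [Nat.sub_add_cancel hn1] at h
        have hα'2 : (1 / L) ^ 2 ≤ (alphaMG (n - 1)) ^ 2 :=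
          pow_le_pow_left₀ (by positivity) (hMGlow (n - 1)) 2
        have hXnn : 0 ≤ 4 * P n / ((alphaMG (n - 1)) ^ 2 * P (n - 1)) := by
          apply div_nonneg (by linarith [hPpos n])
          exact mul_nonneg (sq_nonneg _) (hPpos (n - 1)).le
        have hXle : (1 / alphaMG (n - 1) - 1 / alphaMG n) ^ 2 +
            4 * P n / ((alphaMG (n - 1)) ^ 2 * P (n - 1)) ≤ L ^ 2 + 4 * L ^ 2 * C ^ 2 := by
          have hd2' : (1 / alphaMG (n - 1) - 1 / alphaMG n) ^ 2 ≤ L ^ 2 := by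
            apply sq_le_sq'
            · linarith [hinvlow (n - 1), hinvhigh n, hl0]
            · linarith [hinvhigh (n - 1), hinvlow n, hl0]
          have hsec : 4 * P n / ((alphaMG (n - 1)) ^ 2 * P (n - 1)) ≤ 4 * L ^ 2 * C ^ 2 := by
            rw [div_le_iff₀ (mul_pos (pow_pos (hMGpos (n - 1)) 2) (hPpos (n - 1)))]
            have h1 : (1 / L) ^ 2 * P (n - 1) ≤ (alphaMG (n - 1)) ^ 2 * P (n - 1) :=
              mul_le_mul_of_nonneg_right hα'2 (hPpos (n - 1)).le
            have h0 : (0:ℝ) ≤ 4 * L ^ 2 * C ^ 2 := by positivity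
            have h5 := mul_le_mul_of_nonneg_left h1 h0
            have hLne : L ≠ 0 := hL0.ne'
            have h4 : 4 * L ^ 2 * C ^ 2 * ((1 / L) ^ 2 * P (n - 1)) = 4 * C ^ 2 * P (n - 1) := by
              field_simp
            rw [h4] at h5
            have h6 : 4 * P n ≤ 4 * C ^ 2 * P (n - 1) := by linarith [hPn]
            exact h6.trans h5
          linarith
        obtain ⟨S, hSdef⟩ : ∃ S : ℝ, S = Real.sqrt ((1 / alphaMG (n - 1) - 1 / alphaMG n) ^ 2 +
            4 * P n / ((alphaMG (n - 1)) ^ 2 * P (n - 1))) := ⟨_, rfl⟩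
        rw [← hSdef] at hα
        obtain ⟨D, hDdef⟩ : ∃ D : ℝ, D = S + 1 / alphaMG (n - 1) + 1 / alphaMG n := ⟨_, rfl⟩
        rw [show S + 1 / alphaMG (n - 1) + 1 / alphaMG n = D from hDdef.symm] at hα
        have hS0 : 0 ≤ S := hSdef ▸ Real.sqrt_nonneg _
        have hsqX0 : |1 / alphaMG (n - 1) - 1 / alphaMG n| ≤ S := by
          rw [hSdef, ← Real.sqrt_sq_eq_abs]
          exact Real.sqrt_le_sqrt (by linarith)
        have hsqXle : S ≤ Real.sqrt (L ^ 2 + 4 * L ^ 2 * C ^ 2) := by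
          rw [hSdef]
          exact Real.sqrt_le_sqrt hXle
        have hDpos : 0 < D := by
          rw [hDdef]
          linarith [hinvlow (n - 1), hinvlow n]
        have hα2D : alpha n = 2 / D := by rw [hα, div_eq_mul_inv]
        have hD2a : D ≤ 2 / a := by
          rw [h2a, hDdef]
          linarith [hinvhigh (n - 1), hinvhigh n]
        have hD2l : 2 * l ≤ D := by
          rw [hDdef]
          linarith [hinvlow (n - 1), hinvlow n]
        have hDαn : 2 / alphaMG n ≤ D := by
          have h1 : 1 / alphaMG n - 1 / alphaMG (n - 1) ≤ S := by
            have h2 := le_abs_self (1 / alphaMG n - 1 / alphaMG (n - 1))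
            rw [abs_sub_comm] at h2
            linarith [hsqX0]
          have h2 : 2 / alphaMG n = 1 / alphaMG n + 1 / alphaMG n := by ring
          rw [h2, hDdef]
          linarith
        rw [hα2D, htn]
        refine ⟨?_, ?_, ?_⟩
        · rw [le_div_iff₀ hDpos]
          have h1 : a * D ≤ a * (2 / a) := mul_le_mul_of_nonneg_left hD2a ha0.le
          have h2 : a * (2 / a) = 2 := by
            rw [mul_comm]
            exact div_mul_cancel₀ 2 ha0.ne'
          exact h1.trans (le_of_eq h2)
        · rw [div_le_div_iff₀ hDpos hl0]
          linarith [hD2l]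
        · rw [div_le_iff₀ hDpos]
          calc (2:ℝ) = (2 / alphaMG n) * alphaMG n := (div_mul_cancel₀ 2 (hMGpos n).ne').symm
            _ ≤ D * alphaMG n := mul_le_mul_of_nonneg_right hDαn (hMGpos n).le
            _ = alphaMG n * D := mul_comm _ _
      · have hne1 : ¬ n % c < d1 := by omega
        have hne2 : ¬ n % c = d1 := by omega
        have hα : alpha n = alpha (n - 1) := by rw [halphaP n, if_neg hne1, if_neg hne2]
        have hc0 : n % c ≠ 0 := by omega
        obtain ⟨hn1, hpred⟩ := hmod n hc0
        have hr2 : n % c ≤ n := Nat.mod_le n c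
        have hteq : t n = t (n - 1) := by
          rcases Nat.lt_or_ge d1 ((n - 1) % c) with hgt' | hge'
          · rw [htgt n hgt, htgt (n - 1) hgt', hpred]
            omega
          · have heqd : (n - 1) % c = d1 := by omega
            rw [htgt n hgt, hteqd (n - 1) heqd, hpred] at *
            omega
        obtain ⟨h1, h2, h3⟩ := ih (n - 1) (by omega)
        rw [hα, hteq]
        exact ⟨h1, h2, h3⟩
    -- convergence of each eigencoordinate, by induction on the eigenvalues below it
    have keyi : ∀ i : Fin N, (∀ j, lam j < lam i → Tendsto (μ j) atTop (𝓝 0)) →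
        Tendsto (μ i) atTop (𝓝 0) := by
      intro i hIH
      set ell : ℕ → ℝ := fun n =>
        ∑ j ∈ Finset.univ.filter (fun j => lam j < lam i), lam j * μ j n ^ 2 with helldef
      set Lam : ℕ → ℝ := fun n =>
        ∑ j ∈ Finset.univ.filter (fun j => ¬ lam j < lam i), lam j * μ j n ^ 2 with hLamdef
      have hsplit : ∀ n, P n = ell n + Lam n := by
        intro n
        rw [hPsum]
        exact (Finset.sum_filter_add_sum_filter_not _ _ _).symm
      have hellnn : ∀ n, 0 ≤ ell n := by
        intro n
        apply Finset.sum_nonneg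
        intro j _
        exact mul_nonneg (hlpos j).le (sq_nonneg _)
      have hLamnn : ∀ n, 0 ≤ Lam n := by
        intro n
        apply Finset.sum_nonneg
        intro j _
        exact mul_nonneg (hlpos j).le (sq_nonneg _)
      have hiLam : ∀ n, lam i * μ i n ^ 2 ≤ Lam n := by
        intro n
        apply Finset.single_le_sum (f := fun j => lam j * μ j n ^ 2)
        · intro j _
          exact mul_nonneg (hlpos j).le (sq_nonneg _)
        · simp [lt_irrefl]
      have hQLam : ∀ n, lam i * Lam n ≤ Q n := by
        intro n
        calc lam i * Lam n
            = ∑ j ∈ Finset.univ.filter (fun j => ¬ lam j < lam i),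
                lam i * (lam j * μ j n ^ 2) := by
              rw [hLamdef]; exact Finset.mul_sum _ _ _
          _ ≤ ∑ j ∈ Finset.univ.filter (fun j => ¬ lam j < lam i),
                lam j ^ 2 * μ j n ^ 2 := by
              apply Finset.sum_le_sum
              intro j hj
              have hij : lam i ≤ lam j := le_of_not_gt (by simpa using (Finset.mem_filter.1 hj).2)
              have hX : 0 ≤ lam j * μ j n ^ 2 := mul_nonneg (hlpos j).le (sq_nonneg _)
              calc lam i * (lam j * μ j n ^ 2)
                  ≤ lam j * (lam j * μ j n ^ 2) := mul_le_mul_of_nonneg_right hij hX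
                _ = lam j ^ 2 * μ j n ^ 2 := by ring
          _ ≤ ∑ j, lam j ^ 2 * μ j n ^ 2 := by
              apply Finset.sum_le_sum_of_subset_of_nonneg (Finset.filter_subset _ _)
              intro j _ _
              positivity
          _ = Q n := (hQsum n).symm
      have hell0 : Tendsto ell atTop (𝓝 0) := by
        rw [helldef]
        have h := tendsto_finset_sum (Finset.univ.filter (fun j => lam j < lam i))
          (f := fun j (n : ℕ) => lam j * μ j n ^ 2) (x := atTop) (a := fun j => 0) ?_
        · simpa using h
        · intro j hj
          have hj' : lam j < lam i := by
            have := Finset.mem_filter.1 hj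
            simpa using this.2
          have h1 := (hIH j hj').pow 2
          have h2 := h1.const_mul (lam j)
          simpa using h2
      clear_value ell Lam
      set ρ := max (1 - a * lam i) (1 / 2 : ℝ) with hρdef
      have hρ1 : ρ < 1 := by
        rw [hρdef]
        apply max_lt
        · nlinarith [ha0, hlpos i]
        · norm_num
      have hρ0 : 0 ≤ ρ := by
        rw [hρdef]
        exact le_max_of_le_right (by norm_num)
      have hρhalf : (1:ℝ) / 2 ≤ ρ := by rw [hρdef]; exact le_max_right _ _
      have hρa : 1 - a * lam i ≤ ρ := by rw [hρdef]; exact le_max_left _ _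
      clear_value ρ
      have hgood : ∀ n, 2 * ell (t n) ≤ Lam (t n) → |1 - alpha n * lam i| ≤ ρ := by
        intro n hgn
        have hLampos : 0 < Lam (t n) := by
          have h1 := hPpos (t n)
          have h2 := hsplit (t n)
          have h3 := hellnn (t n)
          linarith
        have hMGi : alphaMG (t n) * lam i ≤ 3 / 2 := by
          rw [hMG' (t n), div_mul_eq_mul_div, div_le_iff₀ (hQpos _)]
          have h1 := hQLam (t n)
          have h2 := hsplit (t n)
          nlinarith [hlpos i, hellnn (t n)]
        obtain ⟨hk1, -, hk3⟩ := key n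
        have h3 : alpha n * lam i ≤ 3 / 2 :=
          le_trans (mul_le_mul_of_nonneg_right hk3 (hlpos i).le) hMGi
        have h4 : a * lam i ≤ alpha n * lam i :=
          mul_le_mul_of_nonneg_right hk1 (hlpos i).le
        rw [abs_le]
        constructor
        · linarith
        · linarith
      set e : ℕ → ℝ := fun n => Real.sqrt (2 * ell n / lam i) with hedef
      have he0 : ∀ n, 0 ≤ e n := fun n => Real.sqrt_nonneg _
      have he : Tendsto e atTop (𝓝 0) := by
        rw [hedef]
        have h1 : Tendsto (fun n => 2 * ell n / lam i) atTop (𝓝 0) := by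
          have := (hell0.const_mul 2).div_const (lam i)
          simpa using this
        have h2 := (Real.continuous_sqrt.tendsto 0).comp h1
        simpa [Real.sqrt_zero, Function.comp_def] using h2
      have hbad : ∀ m, ¬ 2 * ell m ≤ Lam m → |μ i m| ≤ e m := by
        intro m hm
        push_neg at hm
        have h1 := hiLam m
        have h3 : μ i m ^ 2 ≤ 2 * ell m / lam i := by
          rw [le_div_iff₀ (hlpos i)]
          nlinarith
        rw [hedef]
        calc |μ i m| = Real.sqrt (μ i m ^ 2) := (Real.sqrt_sq_eq_abs _).symm
          _ ≤ Real.sqrt (2 * ell m / lam i) := Real.sqrt_le_sqrt h3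
      clear_value e
      apply mgc_abs_seq_tendsto_zero (μ i) (fun n => |1 - alpha n * lam i|) e t C ρ c
        (by omega) hC1 hρ0 hρ1
      · intro n
        obtain ⟨hk1, hk2, -⟩ := key n
        exact habs (alpha n) (le_trans ha0.le hk1) hk2 i
      · intro n
        rw [hμrec i n, abs_mul]
      · exact ht1
      · exact ht2
      · exact he
      · exact he0
      · intro n
        by_cases h : 2 * ell (t n) ≤ Lam (t n)
        · exact Or.inl (hgood n h)
        · exact Or.inr (hbad (t n) h)
    have hμ0 : ∀ i, Tendsto (μ i) atTop (𝓝 0) := by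
      have hcard : ∀ k (i : Fin N),
          (Finset.univ.filter (fun j => lam j < lam i)).card ≤ k →
          Tendsto (μ i) atTop (𝓝 0) := by
        intro k
        induction k with
        | zero =>
          intro i hi
          apply keyi i
          intro j hj
          exfalso
          have hmem : j ∈ Finset.univ.filter (fun j => lam j < lam i) := by simp [hj]
          have := Finset.card_pos.2 ⟨j, hmem⟩
          omega
        | succ k ih =>
          intro i hi
          apply keyi i
          intro j hj
          apply ih j
          have hsub : (Finset.univ.filter (fun m => lam m < lam j)) ⊆
              (Finset.univ.filter (fun m => lam m < lam i)) := by
            intro m hm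
            simp only [Finset.mem_filter, Finset.mem_univ, true_and] at hm ⊢
            exact hm.trans hj
          have hjin : j ∈ Finset.univ.filter (fun m => lam m < lam i) := by simp [hj]
          have hjnot : j ∉ Finset.univ.filter (fun m => lam m < lam j) := by simp
          have hlt : (Finset.univ.filter (fun m => lam m < lam j)).card <
              (Finset.univ.filter (fun m => lam m < lam i)).card :=
            Finset.card_lt_card ⟨hsub, fun h => hjnot (h hjin)⟩
          omega
      exact fun i => hcard _ i le_rfl
    -- coordinatewise convergence of the gradient
    have hgj : ∀ j : Fin N, Tendsto (fun n => g n j) atTop (𝓝 0) := by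
      intro j
      have hform : ∀ n, g n j = ∑ i, ((v i : Fin N → ℝ) ⬝ᵥ Pi.single j 1) * μ i n := by
        intro n
        have h := F2 (Pi.single j 1) (g n)
        rw [single_dotProduct, one_mul] at h
        rw [h]
        exact Finset.sum_congr rfl fun i _ => by rw [hμeq]
      have : (fun n => g n j) = fun n => ∑ i, ((v i : Fin N → ℝ) ⬝ᵥ Pi.single j 1) * μ i n :=
        funext hform
      rw [this]
      have h := tendsto_finset_sum (Finset.univ : Finset (Fin N))
        (f := fun i (n : ℕ) => ((v i : Fin N → ℝ) ⬝ᵥ Pi.single j 1) * μ i n)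
        (x := atTop) (a := fun i => 0) ?_
      · simpa using h
      · intro i _
        simpa using (hμ0 i).const_mul ((v i : Fin N → ℝ) ⬝ᵥ Pi.single j 1)
    -- pass to the iterates through A⁻¹
    have hdet : IsUnit A.det := isUnit_iff_ne_zero.2 hA.det_pos.ne'
    have hxg : ∀ n, x n = fun j => xstar j + ∑ k, A⁻¹ j k * g n k := by
      intro n
      have h1 : A.mulVec (x n - xstar) = g n := by
        rw [Matrix.mulVec_sub, hxstar, hg n]
      have h2 : A⁻¹.mulVec (A.mulVec (x n - xstar)) = x n - xstar := by
        rw [Matrix.mulVec_mulVec, Matrix.nonsing_inv_mul A hdet, Matrix.one_mulVec]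
      rw [h1] at h2
      funext j
      have h3 := congrFun h2 j
      have h4 : (A⁻¹.mulVec (g n)) j = ∑ k, A⁻¹ j k * g n k := rfl
      rw [h4] at h3
      have h5 : (x n - xstar) j = x n j - xstar j := rfl
      rw [h5] at h3
      linarith [h3]
    rw [tendsto_pi_nhds]
    intro j
    have hxj : (fun n => x n j) = fun n => xstar j + ∑ k, A⁻¹ j k * g n k := by
      funext n
      rw [hxg n]
    rw [hxj]
    have hsum : Tendsto (fun n => ∑ k, A⁻¹ j k * g n k) atTop (𝓝 0) := by
      have h := tendsto_finset_sum (Finset.univ : Finset (Fin N))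
        (f := fun k (n : ℕ) => A⁻¹ j k * g n k) (x := atTop) (a := fun k => 0) ?_
      · simpa using h
      · intro k _
        simpa using (hgj k).const_mul (A⁻¹ j k)
    have := hsum.const_add (xstar j)
    simpa using this
end
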